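/- arXiv:2007.00345 — 14 statements merged into one kernel-verified Lean document; each statement's English description precedes it below -/
import Mathlib

section
/- In the distributed linearly separable computation model, suppose the scheme is correct for a demand matrix F ∈ Matrix (Fin K_c) (Fin K) 𝔽_q whose k-th column is nonzero. Then dataset k is assigned to at least N − N_r + 1 workers, i.e. the cardinality of the set {n : Fin N | k ∈ Z n} is at least N − N_r + 1. -/
/-- In the distributed linearly separable computation model, if the scheme is
correct for a demand matrix `F` whose `k`-th column is nonzero, then dataset `k` is assigned
to at least `N - N_r + 1` workers. -/
theorem stmt_0
    {𝔽 : Type} [Field 𝔽] [Fintype 𝔽]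
    (K L N Nr Kc : ℕ)
    (hK : 0 < K) (hL : 0 < L) (hN : 0 < N) (hNr : 0 < Nr) (hKcpos : 0 < Kc)
    (hNrN : Nr ≤ N) (hKcK : Kc ≤ K)
    (Z : Fin N → Finset (Fin K))
    (T : Fin N → ℕ)
    (ψ : (n : Fin N) → (Fin K → Fin L → 𝔽) → (Fin (T n) → 𝔽))
    (hψ : ∀ (n : Fin N) (W W' : Fin K → Fin L → 𝔽),
      (∀ k ∈ Z n, W k = W' k) → ψ n W = ψ n W')
    (F : Matrix (Fin Kc) (Fin K) 𝔽)
    (hcor : ∀ A : Finset (Fin N), A.card = Nr →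
      ∃ φ : ((n : {m : Fin N // m ∈ A}) → (Fin (T n.val) → 𝔽)) → Matrix (Fin Kc) (Fin L) 𝔽,
        ∀ W : Fin K → Fin L → 𝔽, φ (fun n => ψ n.val W) = F * Matrix.of W)
    (k : Fin K) (hk : ∃ i, F i k ≠ 0) :
    N - Nr + 1 ≤ (Finset.univ.filter fun n : Fin N => k ∈ Z n).card := by
  by_contra h
  push_neg at h
  set S := Finset.univ.filter (fun n : Fin N => k ∈ Z n) with hS
  have hcompl : Nr ≤ Sᶜ.card := by
    have h1 : Sᶜ.card = N - S.card := by
      rw [Finset.card_compl, Fintype.card_fin]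
    have h2 : S.card ≤ Fintype.card (Fin N) := Finset.card_le_univ S
    rw [Fintype.card_fin] at h2
    omega
  obtain ⟨A, hAsub, hAcard⟩ := Finset.exists_subset_card_eq hcompl
  obtain ⟨φ, hφ⟩ := hcor A hAcard
  obtain ⟨i, hi⟩ := hk
  set W0 : Fin K → Fin L → 𝔽 := fun _ _ => (0 : 𝔽) with hW0
  set W1 : Fin K → Fin L → 𝔽 := fun m _ => if m = k then 1 else 0 with hW1
  have hsame : (fun n : {m : Fin N // m ∈ A} => ψ n.val W0)
      = fun n : {m : Fin N // m ∈ A} => ψ n.val W1 := by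
    funext n
    apply hψ
    intro m hm
    have hnA : n.val ∈ Sᶜ := hAsub n.2
    have hnk : k ∉ Z n.val := by
      rw [Finset.mem_compl, hS, Finset.mem_filter] at hnA
      simpa using hnA
    have hmk : m ≠ k := fun he => hnk (he ▸ hm)
    funext j
    simp [hW0, hW1, hmk]
  have heq : F * Matrix.of W0 = F * Matrix.of W1 := by
    rw [← hφ W0, ← hφ W1, hsame]
  have := congrFun (congrFun heq i) ⟨0, hL⟩
  simp only [Matrix.mul_apply, Matrix.of_apply, hW0, hW1, mul_zero,
    Finset.sum_const_zero, mul_ite, mul_one] at this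
  rw [Finset.sum_ite_eq' Finset.univ k (fun m => F i m)] at this
  simp at this
  exact hi this.symm
end

section
/- In the distributed linearly separable computation model, suppose the scheme is correct for a demand matrix F ∈ Matrix (Fin K_c) (Fin K) 𝔽_q of rank K_c (with K_c ≤ K). Then for every subset A ⊆ Fin N with |A| = N_r, the total answer length satisfies Σ_{n ∈ A} T_n ≥ K_c · L. -/
/-- If the scheme is correct for a demand matrix `F` of rank `K_c`, then for
every set `A` of `N_r` workers, the total answer length satisfies `∑_{n ∈ A} T_n ≥ K_c·L`. -/
theorem stmt_1
    {𝔽 : Type} [Field 𝔽] [Fintype 𝔽]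
    (K L N Nr Kc : ℕ)
    (hK : 0 < K) (hL : 0 < L) (hN : 0 < N) (hNr : 0 < Nr) (hKcpos : 0 < Kc)
    (hNrN : Nr ≤ N) (hKcK : Kc ≤ K)
    (Z : Fin N → Finset (Fin K))
    (T : Fin N → ℕ)
    (ψ : (n : Fin N) → (Fin K → Fin L → 𝔽) → (Fin (T n) → 𝔽))
    (hψ : ∀ (n : Fin N) (W W' : Fin K → Fin L → 𝔽),
      (∀ k ∈ Z n, W k = W' k) → ψ n W = ψ n W')
    (F : Matrix (Fin Kc) (Fin K) 𝔽)
    (hrank : F.rank = Kc)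
    (hcor : ∀ A : Finset (Fin N), A.card = Nr →
      ∃ φ : ((n : {m : Fin N // m ∈ A}) → (Fin (T n.val) → 𝔽)) → Matrix (Fin Kc) (Fin L) 𝔽,
        ∀ W : Fin K → Fin L → 𝔽, φ (fun n => ψ n.val W) = F * Matrix.of W) :
    ∀ A : Finset (Fin N), A.card = Nr → Kc * L ≤ ∑ n ∈ A, T n := by
  intro A hA
  obtain ⟨φ, hφ⟩ := hcor A hA
  -- F.mulVecLin is surjective since rank = Kc
  have hmv : Function.Surjective F.mulVecLin := by
    rw [← LinearMap.range_eq_top]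
    apply Submodule.eq_top_of_finrank_eq
    rw [← Matrix.rank, hrank, Module.finrank_fintype_fun_eq_card, Fintype.card_fin]
  -- hence W ↦ F * W is surjective onto Kc × L matrices
  have hsurj : Function.Surjective (fun W : Fin K → Fin L → 𝔽 => F * Matrix.of W) := by
    intro M
    choose v hv using fun j : Fin L => hmv (fun i => M i j)
    refine ⟨fun k l => v l k, ?_⟩
    ext i j
    simpa [Matrix.mul_apply, Matrix.mulVecLin, Matrix.mulVec, dotProduct] using
      congrFun (hv j) i
  -- so φ ∘ (answers) is surjective
  have hsurj2 : Function.Surjective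
      (fun W : Fin K → Fin L → 𝔽 => φ (fun n => ψ n.val W)) := by
    intro M
    obtain ⟨W, hW⟩ := hsurj M
    exact ⟨W, (hφ W).trans hW⟩
  have hφs : Function.Surjective φ := by
    intro M
    obtain ⟨W, hW⟩ := hsurj2 M
    exact ⟨_, hW⟩
  have hcard : Fintype.card (Matrix (Fin Kc) (Fin L) 𝔽) ≤
      Fintype.card ((n : {m : Fin N // m ∈ A}) → (Fin (T n.val) → 𝔽)) :=
    Fintype.card_le_of_surjective _ hφs
  have hq : 2 ≤ Fintype.card 𝔽 := Fintype.one_lt_card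
  have h1 : Fintype.card (Matrix (Fin Kc) (Fin L) 𝔽) = Fintype.card 𝔽 ^ (Kc * L) := by
    show Fintype.card (Fin Kc → Fin L → 𝔽) = _
    simp [Fintype.card_fun, pow_mul]
    rw [← pow_mul, ← pow_mul, Nat.mul_comm]
  have h2 : Fintype.card ((n : {m : Fin N // m ∈ A}) → (Fin (T n.val) → 𝔽))
      = Fintype.card 𝔽 ^ (∑ n ∈ A, T n) := by
    rw [Fintype.card_pi]
    have : ∀ n : {m : Fin N // m ∈ A}, Fintype.card (Fin (T n.val) → 𝔽)
        = Fintype.card 𝔽 ^ T n.val := by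
      intro n; simp [Fintype.card_fun]
    rw [Finset.prod_congr rfl (fun n _ => this n)]
    rw [← Finset.prod_pow_eq_pow_sum]
    exact (Finset.prod_coe_sort A (fun n => Fintype.card 𝔽 ^ T n)).symm ▸ rfl
  rw [h1, h2] at hcard
  exact (Nat.pow_le_pow_iff_right hq).mp hcard
end

section
/- In the distributed linearly separable computation model, suppose the scheme is correct for a demand matrix F. Let A ⊆ Fin N with |A| = N_r, let n ∈ A, and let G ⊆ Fin K be a set of datasets none of which is assigned to any worker in A other than n (i.e. G ∩ Z m = ∅ for every m ∈ A with m ≠ n). Then the answer length of worker n satisfies T_n ≥ rank(F^{(G)}) · L, where F^{(G)} is the submatrix of F on the columns indexed by G. -/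
/-- If the scheme is correct for `F`, `A` is a set of `N_r` workers, `n ∈ A`,
and `G` is a set of datasets none of which is assigned to any worker of `A` other than `n`,
then `T_n ≥ rank(F^{(G)}) · L`, where `F^{(G)}` is the column submatrix of `F` on `G`. -/
theorem stmt_2
    {𝔽 : Type} [Field 𝔽] [Fintype 𝔽]
    (K L N Nr Kc : ℕ)
    (hK : 0 < K) (hL : 0 < L) (hN : 0 < N) (hNr : 0 < Nr) (hKcpos : 0 < Kc)
    (hNrN : Nr ≤ N) (hKcK : Kc ≤ K)
    (Z : Fin N → Finset (Fin K))
    (T : Fin N → ℕ)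
    (ψ : (n : Fin N) → (Fin K → Fin L → 𝔽) → (Fin (T n) → 𝔽))
    (hψ : ∀ (n : Fin N) (W W' : Fin K → Fin L → 𝔽),
      (∀ k ∈ Z n, W k = W' k) → ψ n W = ψ n W')
    (F : Matrix (Fin Kc) (Fin K) 𝔽)
    (hcor : ∀ A : Finset (Fin N), A.card = Nr →
      ∃ φ : ((n : {m : Fin N // m ∈ A}) → (Fin (T n.val) → 𝔽)) → Matrix (Fin Kc) (Fin L) 𝔽,
        ∀ W : Fin K → Fin L → 𝔽, φ (fun n => ψ n.val W) = F * Matrix.of W)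
    (A : Finset (Fin N)) (hA : A.card = Nr) (n : Fin N) (hn : n ∈ A)
    (G : Finset (Fin K)) (hG : ∀ m ∈ A, m ≠ n → G ∩ Z m = ∅) :
    (F.submatrix id (fun j : {x // x ∈ G} => j.val)).rank * L ≤ T n := by
  classical
  set F' : Matrix (Fin Kc) {x // x ∈ G} 𝔽 :=
    F.submatrix id (fun j : {x // x ∈ G} => j.val) with hF'
  set V := LinearMap.range F'.mulVecLin with hV
  obtain ⟨φ, hφ⟩ := hcor A hA
  -- extension by zero
  let ext : ({x // x ∈ G} → 𝔽) → (Fin L → {x // x ∈ G} → 𝔽) → (Fin K → Fin L → 𝔽) := fun _ w =>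
    fun k l => if h : k ∈ G then w l ⟨k, h⟩ else 0
  let E : (Fin L → {x // x ∈ G} → 𝔽) → (Fin K → Fin L → 𝔽) := fun w k l =>
    if h : k ∈ G then w l ⟨k, h⟩ else 0
  have key : ∀ (w : Fin L → {x // x ∈ G} → 𝔽) (i : Fin Kc) (l : Fin L),
      (F * Matrix.of (E w)) i l = F'.mulVec (w l) i := by
    intro w i l
    have h1 : ∀ k ∈ Finset.univ, k ∉ G → F i k * E w k l = 0 := by
      intro k _ hk
      simp [E, dif_neg hk]
    rw [Matrix.mul_apply]
    simp only [Matrix.of_apply]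
    rw [← Finset.sum_subset (Finset.subset_univ G) h1]
    rw [Matrix.mulVec, dotProduct, Finset.univ_eq_attach,
      ← Finset.sum_attach G (fun k => F i k * E w k l)]
    apply Finset.sum_congr rfl
    intro k _
    simp [E, F', dif_pos k.2]
  -- choose preimages
  choose pre hpre using fun (v : V) => v.2
  -- the injection
  let Φ : (Fin L → V) → (Fin (T n) → 𝔽) := fun v => ψ n (E (fun l => pre (v l)))
  have hΦ : Function.Injective Φ := by
    intro v v' hvv
    set W := E (fun l => pre (v l)) with hW
    set W' := E (fun l => pre (v' l)) with hW'
    have hans : (fun m : {m : Fin N // m ∈ A} => ψ m.val W) =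
        (fun m : {m : Fin N // m ∈ A} => ψ m.val W') := by
      funext m
      rcases eq_or_ne m.val n with h | h
      · revert hvv
        subst h
        exact fun hvv => hvv
      · apply hψ
        intro k hk
        have hkG : k ∉ G := by
          intro hkG
          have : k ∈ G ∩ Z m.val := Finset.mem_inter.2 ⟨hkG, hk⟩
          rw [hG m.val m.2 h] at this
          exact absurd this (Finset.notMem_empty k)
        funext l
        simp [W, W', E, dif_neg hkG]
    have hFW : F * Matrix.of W = F * Matrix.of W' := by
      rw [← hφ W, ← hφ W', hans]
    funext l
    apply Subtype.ext
    funext i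
    have h1 := key (fun l => pre (v l)) i l
    have h2 := key (fun l => pre (v' l)) i l
    have hp1 : F'.mulVec (pre (v l)) = (v l : Fin Kc → 𝔽) := hpre (v l)
    have hp2 : F'.mulVec (pre (v' l)) = (v' l : Fin Kc → 𝔽) := hpre (v' l)
    have : (F * Matrix.of W) i l = (F * Matrix.of W') i l := by rw [hFW]
    rw [h1, h2, hp1, hp2] at this
    exact this
  -- cardinality argument
  have hcard : Fintype.card (Fin L → V) ≤ Fintype.card (Fin (T n) → 𝔽) :=
    Fintype.card_le_of_injective Φ hΦ
  have hq : 1 < Fintype.card 𝔽 := Fintype.one_lt_card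
  have hVcard : Fintype.card V = Fintype.card 𝔽 ^ F'.rank := by
    rw [Module.card_eq_pow_finrank (K := 𝔽) (V := V)]
    rfl
  rw [Fintype.card_fun, Fintype.card_fun, hVcard, Fintype.card_fin, Fintype.card_fin,
    ← pow_mul] at hcard
  exact (Nat.pow_le_pow_iff_right hq).mp hcard
end

section
/- Let N, K, N_r be positive integers with N_r ≤ N and N dividing K. Let Z : Fin N → Finset (Fin K) be an assignment in which every dataset k ∈ Fin K is assigned to exactly N − N_r + 1 workers (|{n : k ∈ Z n}| = N − N_r + 1) and |Z n| ≤ (K/N)·(N − N_r + 1) for every worker n. For each S ⊆ Fin N with |S| = N − N_r + 1, let G_S = {k ∈ Fin K : {n : k ∈ Z n} = S}. Then for every worker n ∈ Fin N there exists a set S of size N − N_r + 1 with n ∈ S and |G_S| ≥ ⌈K / C(N, N − N_r + 1)⌉, where C(·,·) denotes the binomial coefficient. -/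
/-- If every dataset is assigned to exactly `N - N_r + 1` workers and every
worker gets at most `(K/N)·(N - N_r + 1)` datasets, then for every worker `n` there is a set
`S` of `N - N_r + 1` workers containing `n` with `|G_S| ≥ ⌈K / C(N, N - N_r + 1)⌉`, where
`G_S` is the set of datasets assigned exactly to the workers in `S`. -/
theorem stmt_3 (N K Nr : ℕ) (hN : 0 < N) (hK : 0 < K) (hNr : 0 < Nr)
    (hNrN : Nr ≤ N) (hNK : N ∣ K)
    (Z : Fin N → Finset (Fin K))
    (hexact : ∀ k : Fin K, (Finset.univ.filter fun n : Fin N => k ∈ Z n).card = N - Nr + 1)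
    (hsize : ∀ n : Fin N, (Z n).card ≤ K / N * (N - Nr + 1)) :
    ∀ n : Fin N, ∃ S : Finset (Fin N), S.card = N - Nr + 1 ∧ n ∈ S ∧
      ⌈(K : ℚ) / (N.choose (N - Nr + 1) : ℚ)⌉₊ ≤
        (Finset.univ.filter
          fun k : Fin K => (Finset.univ.filter fun m : Fin N => k ∈ Z m) = S).card := by
  intro n
  set r := N - Nr + 1 with hr
  have hrN : r ≤ N := by omega
  have hrpos : 0 < r := by omega
  set sig : Fin K → Finset (Fin N) := fun k => Finset.univ.filter fun m : Fin N => k ∈ Z m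
    with hsig
  set G : Finset (Fin N) → Finset (Fin K) :=
    fun S => Finset.univ.filter fun k : Fin K => sig k = S with hG
  -- total count
  have htot : ∑ m : Fin N, (Z m).card = K * r := by
    have h1 : ∀ m : Fin N, (Z m).card = ∑ k : Fin K, if k ∈ Z m then 1 else 0 := by
      intro m
      rw [Finset.sum_ite_mem]
      simp
    calc ∑ m : Fin N, (Z m).card
        = ∑ m : Fin N, ∑ k : Fin K, if k ∈ Z m then 1 else 0 := by
          exact Finset.sum_congr rfl fun m _ => h1 m
      _ = ∑ k : Fin K, ∑ m : Fin N, if k ∈ Z m then 1 else 0 := Finset.sum_comm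
      _ = ∑ k : Fin K, (sig k).card := by
          refine Finset.sum_congr rfl fun k _ => ?_
          exact (Finset.card_filter _ _).symm
      _ = ∑ _k : Fin K, r := Finset.sum_congr rfl fun k _ => hexact k
      _ = K * r := by simp [mul_comm]
  -- every worker has exactly K/N * r datasets
  have hZ : ∀ m : Fin N, (Z m).card = K / N * r := by
    by_contra h
    push_neg at h
    obtain ⟨m, hm⟩ := h
    have hlt : (Z m).card < K / N * r := lt_of_le_of_ne (hsize m) hm
    have hsum : ∑ m : Fin N, (Z m).card < ∑ _m : Fin N, K / N * r :=
      Finset.sum_lt_sum (fun i _ => hsize i) ⟨m, Finset.mem_univ m, hlt⟩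
    rw [htot] at hsum
    simp only [Finset.sum_const, Finset.card_univ, Fintype.card_fin, smul_eq_mul] at hsum
    rw [← mul_assoc, Nat.mul_div_cancel' hNK] at hsum
    omega
  -- the family of signatures of datasets in Z n
  set F : Finset (Finset (Fin N)) := (Z n).image sig with hF
  have hmemF : ∀ S ∈ F, S.card = r ∧ n ∈ S := by
    intro S hS
    rw [hF, Finset.mem_image] at hS
    obtain ⟨k, hk, rfl⟩ := hS
    exact ⟨hexact k, by simp [hsig, hk]⟩
  -- Z n is the disjoint union of the G S, S ∈ F
  have hZn : Z n = F.biUnion G := by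
    ext k
    simp only [Finset.mem_biUnion, hF, Finset.mem_image, hG, Finset.mem_filter,
      Finset.mem_univ, true_and]
    constructor
    · intro hk; exact ⟨sig k, ⟨k, hk, rfl⟩, rfl⟩
    · rintro ⟨S, ⟨k', hk', rfl⟩, hkS⟩
      have : n ∈ sig k := by rw [hkS]; simp [hsig, hk']
      simpa [hsig] using this
  have hcard : (Z n).card = ∑ S ∈ F, (G S).card := by
    rw [hZn]
    apply Finset.card_biUnion
    intro S hS T hT hST
    simp only [Finset.disjoint_left, hG, Finset.mem_filter, Finset.mem_univ, true_and]
    intro k h1 h2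
    exact hST (by rw [← h1, ← h2])
  -- F is nonempty
  have hKN : 0 < K / N := Nat.div_pos (Nat.le_of_dvd hK hNK) hN
  have hFne : F.Nonempty := by
    rw [hF]
    apply Finset.Nonempty.image
    rw [← Finset.card_pos, hZ n]
    positivity
  -- bound on |F|
  have hFcard : F.card ≤ (N - 1).choose (r - 1) := by
    have hinj : Set.InjOn (fun S : Finset (Fin N) => S.erase n) ↑F := by
      intro S hS T hT h
      have hnS := (hmemF S hS).2
      have hnT := (hmemF T hT).2
      rw [← Finset.insert_erase hnS, ← Finset.insert_erase hnT]
      simp only at h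
      rw [h]
    rw [← Finset.card_image_of_injOn hinj]
    have hsub : (F.image fun S => S.erase n) ⊆
        (Finset.univ.erase n).powersetCard (r - 1) := by
      intro T hT
      rw [Finset.mem_image] at hT
      obtain ⟨S, hS, rfl⟩ := hT
      obtain ⟨hScard, hnS⟩ := hmemF S hS
      rw [Finset.mem_powersetCard]
      exact ⟨Finset.erase_subset_erase n (Finset.subset_univ S),
        by rw [Finset.card_erase_of_mem hnS, hScard]⟩
    calc (F.image fun S => S.erase n).card
        ≤ ((Finset.univ.erase n).powersetCard (r - 1)).card := Finset.card_le_card hsub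
      _ = (N - 1).choose (r - 1) := by
          rw [Finset.card_powersetCard, Finset.card_erase_of_mem (Finset.mem_univ n)]
          simp
  -- pick S maximizing |G S|
  obtain ⟨S, hSF, hmax⟩ := F.exists_max_image (fun S => (G S).card) hFne
  obtain ⟨hScard, hnS⟩ := hmemF S hSF
  refine ⟨S, hScard, hnS, ?_⟩
  -- pigeonhole: K/N * r ≤ |F| * |G S|
  have hpigeon : K / N * r ≤ F.card * (G S).card := by
    calc K / N * r = ∑ T ∈ F, (G T).card := by rw [← hZ n, hcard]
      _ ≤ F.card * (G S).card := by
          rw [← smul_eq_mul]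
          exact Finset.sum_le_card_nsmul F _ _ fun T hT => hmax T hT
  -- the key nat inequality: K ≤ C(N,r) * |G S|
  have hchoose : N * (N - 1).choose (r - 1) = N.choose r * r := by
    have := Nat.add_one_mul_choose_eq (N - 1) (r - 1)
    have h1 : N - 1 + 1 = N := by omega
    have h2 : r - 1 + 1 = r := by omega
    simp only [Nat.succ_eq_add_one, h1, h2] at this
    exact this
  have hkey : K ≤ N.choose r * (G S).card := by
    have h1 : K * r ≤ N * ((N - 1).choose (r - 1) * (G S).card) := by
      calc K * r = K / N * r * N := by
            rw [mul_comm _ N, ← mul_assoc, Nat.mul_div_cancel' hNK]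
        _ ≤ F.card * (G S).card * N := Nat.mul_le_mul_right N hpigeon
        _ ≤ (N - 1).choose (r - 1) * (G S).card * N :=
            Nat.mul_le_mul_right N (Nat.mul_le_mul_right _ hFcard)
        _ = N * ((N - 1).choose (r - 1) * (G S).card) := by ring
    rw [← mul_assoc, hchoose] at h1
    have h2 : K * r ≤ N.choose r * (G S).card * r := by
      calc K * r ≤ N.choose r * r * (G S).card := h1
        _ = N.choose r * (G S).card * r := by ring
    exact Nat.le_of_mul_le_mul_right h2 hrpos
  -- conclude
  have hCpos : 0 < N.choose r := Nat.choose_pos hrN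
  rw [Nat.ceil_le, div_le_iff₀ (by exact_mod_cast hCpos)]
  have : ((G S).card : ℚ) * (N.choose r : ℚ) = ((N.choose r * (G S).card : ℕ) : ℚ) := by
    push_cast; ring
  rw [this]
  exact_mod_cast hkey
end

section
/- (Converse bound, Theorem 1.) In the distributed linearly separable computation model, assume N divides K, let Z be an assignment in which every dataset is assigned to exactly N − N_r + 1 workers and |Z n| ≤ (K/N)·(N − N_r + 1) for every worker n, and suppose the scheme is correct for a demand matrix F ∈ Matrix (Fin K_c) (Fin K) 𝔽_q such that rank(F^{(G)}) = min(K_c, |G|) for every subset G ⊆ Fin K of columns. Then for every A ⊆ Fin N with |A| = N_r, the total answer length satisfies Σ_{n ∈ A} T_n ≥ max( N_r · min(K_c, ⌈K / C(N, N − N_r + 1)⌉), K_c ) · L, where C(·,·) denotes the binomial coefficient. -/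
/-!
Cut-set argument. Suppose that among the workers of a decodable set `A` the datasets in `S` are
seen only by the workers of `B`. Messages supported on `S` leave the other answers in `A`
constant, so the answers of `B` determine `F^{(S)} W_S`, which takes `q ^ (rank F^{(S)} · L)`
values. With `B = A` and `S` everything, this gives `K_c L`.

For `B = {n}`, group the datasets of worker `n` by the set of `N - N_r + 1` workers holding them.
Worker `n` holds `(K/N)(N - N_r + 1)` datasets and only `C(N-1, N-N_r)` such sets contain `n`, so
some group `S` has at least `K / C(N, N-N_r+1)` datasets. Adding `n` to the complement of the
holders of `S` gives `N_r` workers, among which only `n` sees `S`.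
-/

open Finset Function Matrix

namespace LinearlySeparable

variable {𝔽 : Type*} {ι κ ρ : Type*} {L : ℕ} {T : ι → ℕ}

def IsLocal (Z : ι → Finset κ) (ψ : (n : ι) → (κ → Fin L → 𝔽) → Fin (T n) → 𝔽) : Prop :=
  ∀ n W W', (∀ k ∈ Z n, W k = W' k) → ψ n W = ψ n W'

variable [Field 𝔽]

def Recovers [Fintype κ] (ψ : (n : ι) → (κ → Fin L → 𝔽) → Fin (T n) → 𝔽)
    (F : Matrix ρ κ 𝔽) (A : Finset ι) : Prop :=
  ∃ φ : ((n : A) → Fin (T n) → 𝔽) → Matrix ρ (Fin L) 𝔽,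
    ∀ W, φ (fun n => ψ n W) = F * Matrix.of W

theorem mul_le_sum_of_injective [Fintype 𝔽] {B : Finset ι} {r : ℕ}
    {f : (Fin r → Fin L → 𝔽) → ((n : B) → Fin (T n) → 𝔽)} (hf : Injective f) :
    r * L ≤ ∑ n ∈ B, T n := by
  classical
  have hcard := Fintype.card_le_of_injective f hf
  simp only [Fintype.card_pi, Fintype.card_fin, prod_const, card_univ,
    prod_pow_eq_pow_sum, univ_eq_attach, sum_attach B T, ← pow_mul'] at hcard
  exact (Nat.pow_le_pow_iff_right Fintype.one_lt_card).mp hcard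

theorem _root_.Matrix.exists_injective_mulVec_comp {m n : Type*} [Fintype n]
    (M : Matrix m n 𝔽) : ∃ E : (Fin M.rank → 𝔽) → n → 𝔽, Injective fun x => M *ᵥ E x := by
  let e : (Fin M.rank → 𝔽) ≃ₗ[𝔽] LinearMap.range M.mulVecLin :=
    LinearEquiv.ofFinrankEq _ _ (Module.finrank_fin_fun 𝔽)
  choose E hE using fun x => (e x).2
  refine ⟨E, fun x y hxy => e.injective (Subtype.ext ?_)⟩
  simp only [mulVecLin_apply] at hE
  simpa [hE] using hxy

theorem _root_.Matrix.mulVec_dite_mem [Fintype κ] [DecidableEq κ] (F : Matrix ρ κ 𝔽)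
    (S : Finset κ) (v : S → 𝔽) :
    (F *ᵥ fun k => if h : k ∈ S then v ⟨k, h⟩ else 0) =
      F.submatrix id (fun j : S => j.val) *ᵥ v := by
  ext i
  simp only [mulVec, dotProduct, mul_dite, mul_zero, submatrix_apply, id_eq]
  exact (sum_attach_eq_sum_dite S fun j => F i j * v j).symm

theorem rank_mul_le_sum_of_recovers [Fintype 𝔽] [Fintype κ] {Z : ι → Finset κ}
    {ψ : (n : ι) → (κ → Fin L → 𝔽) → Fin (T n) → 𝔽} (hψ : IsLocal Z ψ) {F : Matrix ρ κ 𝔽}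
    {A : Finset ι} (hA : Recovers ψ F A) {B : Finset ι} {S : Finset κ}
    (hS : ∀ m ∈ A, m ∉ B → Disjoint (Z m) S) :
    (F.submatrix id (fun j : S => j.val)).rank * L ≤ ∑ n ∈ B, T n := by
  classical
  obtain ⟨φ, hφ⟩ := hA
  obtain ⟨E, hE⟩ := (F.submatrix id (fun j : S => j.val)).exists_injective_mulVec_comp
  let W (X : Fin _ → Fin L → 𝔽) (k : κ) (l : Fin L) : 𝔽 :=
    if h : k ∈ S then E (fun i => X i l) ⟨k, h⟩ else 0
  have hcol : ∀ X l, (fun i => (F * of (W X)) i l) =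
      F.submatrix id (fun j : S => j.val) *ᵥ E (fun i => X i l) := by
    intro X l
    rw [← mulVec_dite_mem]
    rfl
  refine mul_le_sum_of_injective (f := fun X (n : B) => ψ n (W X)) fun X X' hXX' => ?_
  have hdecode : F * of (W X) = F * of (W X') := by
    rw [← hφ, ← hφ]
    congr 1
    funext ⟨m, hm⟩
    by_cases hmB : m ∈ B
    · exact congrFun hXX' ⟨m, hmB⟩
    · refine hψ m _ _ fun k hk => ?_
      have hkS : k ∉ S := disjoint_left.mp (hS m hm hmB) hk
      funext l
      simp [W, hkS]
  funext i l
  have hcolumn : F.submatrix id (fun j : S => j.val) *ᵥ E (fun i => X i l) =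
      F.submatrix id (fun j : S => j.val) *ᵥ E (fun i => X' i l) := by
    rw [← hcol, ← hcol, hdecode]
  exact congrFun (hE hcolumn) i

theorem _root_.Nat.cast_choose_pred_div_choose {n k : ℕ} (hk : 1 ≤ k) (hkn : k ≤ n) :
    ((n - 1).choose (k - 1) : ℚ) / n.choose k = k / n := by
  have hchoose := Nat.add_one_mul_choose_eq (n - 1) (k - 1)
  rw [Nat.sub_add_cancel (hk.trans hkn), Nat.sub_add_cancel hk] at hchoose
  rw [div_eq_div_iff (by exact_mod_cast (Nat.choose_pos hkn).ne')
    (by exact_mod_cast (by omega : n ≠ 0))]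
  exact_mod_cast (mul_comm _ _).trans (hchoose.trans (mul_comm _ _))

section Assignment

variable [Fintype ι] [DecidableEq κ] (Z : ι → Finset κ)

def workersOf (k : κ) : Finset ι := {n | k ∈ Z n}

theorem sum_card_eq_sum_card_workersOf [Fintype κ] :
    ∑ n, #(Z n) = ∑ k, #(workersOf Z k) := by
  simpa [bipartiteAbove, bipartiteBelow, workersOf] using
    sum_card_bipartiteAbove_eq_sum_card_bipartiteBelow (s := univ) (t := univ)
      (r := fun n k => k ∈ Z n)

theorem card_eq_of_card_workersOf_eq [Fintype κ] {d : ℕ} (hd : ∀ k, #(workersOf Z k) = d)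
    (hdvd : Fintype.card ι ∣ Fintype.card κ)
    (hle : ∀ n, #(Z n) ≤ Fintype.card κ / Fintype.card ι * d) (n : ι) :
    #(Z n) = Fintype.card κ / Fintype.card ι * d := by
  have hsum : ∑ n, #(Z n) = ∑ _n : ι, Fintype.card κ / Fintype.card ι * d := by
    rw [sum_card_eq_sum_card_workersOf]
    simp only [hd, sum_const, card_univ, smul_eq_mul, ← mul_assoc, Nat.mul_div_cancel' hdvd]
  exact (sum_eq_sum_iff_of_le fun n _ => hle n).1 hsum n (mem_univ n)

theorem disjoint_filter_workersOf_eq [DecidableEq ι] {P : Finset ι} {m : ι} (hm : m ∉ P)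
    (s : Finset κ) :
    Disjoint (Z m) {k ∈ s | workersOf Z k = P} := by
  refine disjoint_left.mpr fun k hkm hk => hm ?_
  rw [← (mem_filter.mp hk).2]
  simpa [workersOf] using hkm

theorem exists_le_card_filter_workersOf_eq [Fintype κ] [DecidableEq ι] {d : ℕ} (hd : 1 ≤ d)
    (hdι : d ≤ Fintype.card ι) (hworkers : ∀ k, #(workersOf Z k) = d)
    (hdvd : Fintype.card ι ∣ Fintype.card κ)
    (hle : ∀ n, #(Z n) ≤ Fintype.card κ / Fintype.card ι * d) (n : ι) :
    ∃ P : Finset ι, n ∈ P ∧ #P = d ∧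
      (Fintype.card κ : ℚ) / (Fintype.card ι).choose d ≤ #{k ∈ Z n | workersOf Z k = P} := by
  set t := (powersetCard (d - 1) (univ.erase n)).image (insert n)
  have hmaps : ∀ k ∈ Z n, workersOf Z k ∈ t := by
    intro k hk
    have hn : n ∈ workersOf Z k := by simpa [workersOf] using hk
    refine mem_image.mpr ⟨(workersOf Z k).erase n, mem_powersetCard.mpr ⟨?_, ?_⟩,
      insert_erase hn⟩
    · exact erase_subset_erase n (subset_univ _)
    · rw [card_erase_of_mem hn, hworkers]
  have hne : t.Nonempty := by
    refine (powersetCard_nonempty.mpr ?_).image _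
    rw [card_erase_of_mem (mem_univ n), card_univ]
    omega
  have ht : #t ≤ (Fintype.card ι - 1).choose (d - 1) := by
    refine card_image_le.trans_eq ?_
    rw [card_powersetCard, card_erase_of_mem (mem_univ n), card_univ]
  have hbound : #t • ((Fintype.card κ : ℚ) / (Fintype.card ι).choose d) ≤ #(Z n) := by
    rw [nsmul_eq_mul, card_eq_of_card_workersOf_eq Z hworkers hdvd hle n]
    calc (#t : ℚ) * (Fintype.card κ / (Fintype.card ι).choose d)
        ≤ (Fintype.card ι - 1).choose (d - 1) * (Fintype.card κ / (Fintype.card ι).choose d) := by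
          gcongr
      _ = d / Fintype.card ι * Fintype.card κ := by
          rw [← Nat.cast_choose_pred_div_choose hd hdι]
          ring
      _ = ((Fintype.card κ / Fintype.card ι * d : ℕ) : ℚ) := by
          rw [Nat.cast_mul, Nat.cast_div hdvd (by exact_mod_cast (by omega : Fintype.card ι ≠ 0))]
          ring
  obtain ⟨P, hPt, hP⟩ := exists_le_card_fiber_of_nsmul_le_card_of_maps_to hmaps hne hbound
  obtain ⟨Q, hQ, rfl⟩ := mem_image.mp hPt
  obtain ⟨hQn, hQcard⟩ := mem_powersetCard.mp hQ
  have hnQ : n ∉ Q := fun h => by simpa using hQn h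
  exact ⟨insert n Q, mem_insert_self n Q, by rw [card_insert_of_notMem hnQ, hQcard]; omega, hP⟩

end Assignment

end LinearlySeparable

open LinearlySeparable

theorem stmt_4_general
    {𝔽 : Type} [Field 𝔽] [Fintype 𝔽]
    (K L N Nr Kc : ℕ)
    (hNr : 0 < Nr)
    (hNrN : Nr ≤ N) (hKcK : Kc ≤ K) (hNK : N ∣ K)
    (Z : Fin N → Finset (Fin K))
    (hexact : ∀ k : Fin K, (Finset.univ.filter fun n : Fin N => k ∈ Z n).card = N - Nr + 1)
    (hsize : ∀ n : Fin N, (Z n).card ≤ K / N * (N - Nr + 1))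
    (T : Fin N → ℕ)
    (ψ : (n : Fin N) → (Fin K → Fin L → 𝔽) → (Fin (T n) → 𝔽))
    (hψ : ∀ (n : Fin N) (W W' : Fin K → Fin L → 𝔽),
      (∀ k ∈ Z n, W k = W' k) → ψ n W = ψ n W')
    (F : Matrix (Fin Kc) (Fin K) 𝔽)
    (hrank : ∀ G : Finset (Fin K),
      (F.submatrix id (fun j : {x // x ∈ G} => j.val)).rank = min Kc G.card)
    (hcor : ∀ A : Finset (Fin N), A.card = Nr →
      ∃ φ : ((n : {m : Fin N // m ∈ A}) → (Fin (T n.val) → 𝔽)) → Matrix (Fin Kc) (Fin L) 𝔽,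
        ∀ W : Fin K → Fin L → 𝔽, φ (fun n => ψ n.val W) = F * Matrix.of W) :
    ∀ A : Finset (Fin N), A.card = Nr →
      max (Nr * min Kc ⌈(K : ℚ) / (N.choose (N - Nr + 1) : ℚ)⌉₊) Kc * L ≤ ∑ n ∈ A, T n := by
  intro A hA
  have hworker : ∀ n, min Kc ⌈(K : ℚ) / (N.choose (N - Nr + 1) : ℚ)⌉₊ * L ≤ T n := by
    intro n
    obtain ⟨P, hnP, hPcard, hlarge⟩ := exists_le_card_filter_workersOf_eq Z (d := N - Nr + 1)
      (by omega) (by rw [Fintype.card_fin]; omega) hexact (by simpa using hNK)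
      (by simpa using hsize) n
    have hrecover : #(insert n Pᶜ) = Nr := by
      rw [card_insert_of_notMem (by simpa using hnP), card_compl, hPcard, Fintype.card_fin]
      omega
    have hcut := rank_mul_le_sum_of_recovers hψ (hcor _ hrecover) (B := {n})
      (S := {k ∈ Z n | workersOf Z k = P}) fun m hm hmn =>
        disjoint_filter_workersOf_eq Z (by simp_all) _
    rw [hrank, sum_singleton] at hcut
    refine le_trans ?_ hcut
    gcongr
    exact Nat.ceil_le.mpr (by simpa using hlarge)
  have hall : Kc * L ≤ ∑ n ∈ A, T n := by
    have hcut := rank_mul_le_sum_of_recovers hψ (hcor A hA) (B := A) (S := univ)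
      fun m hm hmA => absurd hm hmA
    rwa [hrank, card_univ, Fintype.card_fin, min_eq_left hKcK] at hcut
  rw [max_mul_of_nonneg _ _ (Nat.zero_le L)]
  refine max_le ?_ hall
  calc Nr * min Kc ⌈(K : ℚ) / (N.choose (N - Nr + 1) : ℚ)⌉₊ * L
      = #A • (min Kc ⌈(K : ℚ) / (N.choose (N - Nr + 1) : ℚ)⌉₊ * L) := by
        rw [hA, smul_eq_mul, mul_assoc]
    _ ≤ ∑ n ∈ A, T n := card_nsmul_le_sum A T _ fun n _ => hworker n

/-- Converse bound, Theorem 1: with `N ∣ K`, an assignment in which every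
dataset is assigned to exactly `N − N_r + 1` workers and every worker gets at most
`(K/N)(N − N_r + 1)` datasets, and a demand matrix `F` with `rank(F^{(G)}) = min(K_c, |G|)`
for every column set `G`, any correct scheme satisfies, for every set `A` of `N_r` workers,
`∑_{n ∈ A} T_n ≥ max( N_r · min(K_c, ⌈K / C(N, N − N_r + 1)⌉), K_c ) · L`. -/
theorem stmt_4
    {𝔽 : Type} [Field 𝔽] [Fintype 𝔽]
    (K L N Nr Kc : ℕ)
    (hK : 0 < K) (hL : 0 < L) (hN : 0 < N) (hNr : 0 < Nr) (hKcpos : 0 < Kc)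
    (hNrN : Nr ≤ N) (hKcK : Kc ≤ K) (hNK : N ∣ K)
    (Z : Fin N → Finset (Fin K))
    (hexact : ∀ k : Fin K, (Finset.univ.filter fun n : Fin N => k ∈ Z n).card = N - Nr + 1)
    (hsize : ∀ n : Fin N, (Z n).card ≤ K / N * (N - Nr + 1))
    (T : Fin N → ℕ)
    (ψ : (n : Fin N) → (Fin K → Fin L → 𝔽) → (Fin (T n) → 𝔽))
    (hψ : ∀ (n : Fin N) (W W' : Fin K → Fin L → 𝔽),
      (∀ k ∈ Z n, W k = W' k) → ψ n W = ψ n W')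
    (F : Matrix (Fin Kc) (Fin K) 𝔽)
    (hrank : ∀ G : Finset (Fin K),
      (F.submatrix id (fun j : {x // x ∈ G} => j.val)).rank = min Kc G.card)
    (hcor : ∀ A : Finset (Fin N), A.card = Nr →
      ∃ φ : ((n : {m : Fin N // m ∈ A}) → (Fin (T n.val) → 𝔽)) → Matrix (Fin Kc) (Fin L) 𝔽,
        ∀ W : Fin K → Fin L → 𝔽, φ (fun n => ψ n.val W) = F * Matrix.of W) :
    ∀ A : Finset (Fin N), A.card = Nr →
      max (Nr * min Kc ⌈(K : ℚ) / (N.choose (N - Nr + 1) : ℚ)⌉₊) Kc * L ≤ ∑ n ∈ A, T n :=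
  stmt_4_general K L N Nr Kc hNr hNrN hKcK hNK Z hexact hsize T ψ hψ F hrank hcor
end

section
/- (Converse under the cyclic assignment, Theorem 4.) In the distributed linearly separable computation model with the cyclic assignment, suppose the scheme is correct for a demand matrix F ∈ Matrix (Fin K_c) (Fin (K/N × ZMod N)) 𝔽_q such that rank(F) = K_c and, for every m ∈ ZMod N, the submatrix of F on the K/N columns {(p, m) : p ∈ Fin (K/N)} has rank min(K_c, K/N). Then for every A ⊆ ZMod N with |A| = N_r, the total answer length satisfies Σ_{n ∈ A} T_n ≥ max( N_r · min(K_c, K/N), K_c ) · L. -/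
/-!
Both bounds are counting arguments. If some answers determine `G * W` for a matrix `G` of rank
`r`, then, as `G * W` takes `q ^ (r * L)` values, those answers consist of at least `r * L`
symbols. Taking `G = F` and all the workers of `A` gives `K_c * L`. For the per-worker bound, feed
in data supported on the block `{(p, n) : p}`: only `N - N_r + 1` workers hold it, so some set of
`N_r` workers contains `n` as the only one seeing it, and worker `n` alone must determine
`F_n * W`, where the column block `F_n` has rank `min(K_c, K/N)`.
-/

open Matrix

section Counting

variable {𝔽 κ ι : Type*} [Field 𝔽] [Fintype ι]

theorem Matrix.exists_injective_mulVecLin_comp (G : Matrix κ ι 𝔽) :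
    ∃ u : (Fin G.rank → 𝔽) →ₗ[𝔽] ι → 𝔽, Function.Injective (G.mulVecLin ∘ₗ u) := by
  obtain ⟨s, hs⟩ := G.mulVecLin.rangeRestrict.exists_rightInverse_of_surjective
    (LinearMap.range_rangeRestrict _)
  let e : (Fin G.rank → 𝔽) ≃ₗ[𝔽] LinearMap.range G.mulVecLin :=
    LinearEquiv.ofFinrankEq _ _ (by rw [Module.finrank_fin_fun, Matrix.rank])
  have hsection : ∀ y, G.mulVecLin (s y) = y := fun y =>
    congrArg Subtype.val (LinearMap.congr_fun hs y)
  refine ⟨s ∘ₗ e.toLinearMap, fun v v' h => e.injective (Subtype.ext ?_)⟩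
  simpa only [LinearMap.comp_apply, LinearEquiv.coe_coe, hsection] using h

theorem Matrix.rank_mul_le_of_mul_factors [Fintype 𝔽] {X : Type*} [Fintype X] {t : ℕ}
    (hX : Fintype.card X = Fintype.card 𝔽 ^ t) (G : Matrix κ ι 𝔽) (L : ℕ)
    (g : Matrix ι (Fin L) 𝔽 → X) (hg : ∀ M M', g M = g M' → G * M = G * M') :
    G.rank * L ≤ t := by
  obtain ⟨u, hu⟩ := G.exists_injective_mulVecLin_comp
  let M : (Fin L → Fin G.rank → 𝔽) → Matrix ι (Fin L) 𝔽 := fun C => of fun i l => u (C l) i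
  have hcol : ∀ C l, (fun i => (G * M C) i l) = (G.mulVecLin ∘ₗ u) (C l) := fun C l => by
    ext i
    simp [M, Matrix.mul_apply, Matrix.mulVec, dotProduct]
  have hinj : Function.Injective (g ∘ M) := fun C C' h => by
    funext l
    apply hu
    rw [← hcol, ← hcol, hg _ _ h]
  have hcard := Fintype.card_le_of_injective _ hinj
  rw [hX, Fintype.card_fun, Fintype.card_fun, Fintype.card_fin, Fintype.card_fin,
    ← pow_mul] at hcard
  exact (Nat.pow_le_pow_iff_right Fintype.one_lt_card).mp hcard

end Counting

theorem Matrix.mul_of_ite_snd_eq {R κ ι μ ν : Type*} [NonUnitalNonAssocSemiring R]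
    [Fintype ι] [Fintype μ] [DecidableEq μ] (F : Matrix κ (ι × μ) R) (m : μ) (V : Matrix ι ν R) :
    F * of (fun (c : ι × μ) l => if c.2 = m then V c.1 l else 0) =
      F.submatrix id (fun p => (p, m)) * V := by
  ext i l
  rw [Matrix.mul_apply, Matrix.mul_apply, Fintype.sum_prod_type]
  refine Finset.sum_congr rfl fun p _ => ?_
  simp

theorem Finset.exists_card_eq_inter_subset_singleton {α : Type*} [Fintype α] [DecidableEq α]
    {S : Finset α} {a : α} (ha : a ∈ S) {r : ℕ} (hr : 0 < r)
    (hS : S.card + r ≤ Fintype.card α + 1) :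
    ∃ A : Finset α, A.card = r ∧ a ∈ A ∧ ∀ w ∈ A, w ∈ S → w = a := by
  have hcompl : r - 1 ≤ (univ \ S).card := by
    rw [card_sdiff_of_subset (subset_univ S), card_univ]
    omega
  obtain ⟨B, hBS, hB⟩ := exists_subset_card_eq hcompl
  have haB : a ∉ B := fun h => (mem_sdiff.mp (hBS h)).2 ha
  refine ⟨insert a B, by rw [card_insert_of_notMem haB]; omega, mem_insert_self a B, ?_⟩
  intro w hw hwS
  rcases mem_insert.mp hw with rfl | hwB
  · rfl
  · exact absurd hwS (mem_sdiff.mp (hBS hwB)).2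

section Scheme

variable {𝔽 κ ω γ : Type*} [Field 𝔽] [Fintype 𝔽] {L : ℕ} {T : ω → ℕ}

theorem rank_mul_le_sum_answerLength [Fintype γ] [DecidableEq ω]
    (ψ : (n : ω) → (γ → Fin L → 𝔽) → Fin (T n) → 𝔽) (F : Matrix κ γ 𝔽) (A : Finset ω)
    (φ : ((n : A) → Fin (T n) → 𝔽) → Matrix κ (Fin L) 𝔽)
    (hφ : ∀ W, φ (fun n => ψ n W) = F * of W) :
    F.rank * L ≤ ∑ n ∈ A, T n := by
  refine F.rank_mul_le_of_mul_factors ?_ L (fun W (n : A) => ψ n W) fun W W' h => ?_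
  · simp [Fintype.card_pi, Finset.prod_pow_eq_pow_sum, Finset.sum_attach A T]
  · exact (hφ W).symm.trans ((congrArg φ h).trans (hφ W'))

theorem rank_submatrix_mul_le_answerLength {ι : Type*} [Fintype ι] {N Nr : ℕ} [NeZero N]
    (hNr : 0 < Nr) (hNrN : Nr ≤ N) {T : ZMod N → ℕ}
    (ψ : (n : ZMod N) → (ι × ZMod N → Fin L → 𝔽) → Fin (T n) → 𝔽)
    (hψ : ∀ (n : ZMod N) (W W' : ι × ZMod N → Fin L → 𝔽),
      (∀ c : ι × ZMod N,
        c.2 ∈ (Finset.range (N - Nr + 1)).image (fun j : ℕ => n + (j : ZMod N)) → W c = W' c) →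
      ψ n W = ψ n W')
    (F : Matrix κ (ι × ZMod N) 𝔽)
    (hcor : ∀ A : Finset (ZMod N), A.card = Nr →
      ∃ φ : ((n : {m : ZMod N // m ∈ A}) → (Fin (T n.val) → 𝔽)) → Matrix κ (Fin L) 𝔽,
        ∀ W : ι × ZMod N → Fin L → 𝔽, φ (fun n => ψ n.val W) = F * of W)
    (n : ZMod N) :
    (F.submatrix id (fun p => (p, n))).rank * L ≤ T n := by
  set holders := (Finset.range (N - Nr + 1)).image (fun j : ℕ => n - (j : ZMod N))
  have hn : n ∈ holders := Finset.mem_image.mpr ⟨0, by simp, by simp⟩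
  have hcard : holders.card + Nr ≤ Fintype.card (ZMod N) + 1 := by
    have : holders.card ≤ N - Nr + 1 := Finset.card_image_le.trans_eq (Finset.card_range _)
    rw [ZMod.card]
    omega
  obtain ⟨A, hA, -, hAholders⟩ :=
    Finset.exists_card_eq_inter_subset_singleton hn hNr hcard
  obtain ⟨φ, hφ⟩ := hcor A hA
  let extend : Matrix ι (Fin L) 𝔽 → ι × ZMod N → Fin L → 𝔽 :=
    fun V c l => if c.2 = n then V c.1 l else 0
  have hblind : ∀ w ∈ A, w ≠ n → ∀ V V', ψ w (extend V) = ψ w (extend V') := by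
    intro w hwA hwn V V'
    apply hψ
    intro c hc
    have hc2 : c.2 ≠ n := by
      rintro h
      obtain ⟨j, hj, hjc⟩ := Finset.mem_image.mp hc
      refine hwn (hAholders w hwA (Finset.mem_image.mpr ⟨j, hj, ?_⟩))
      rw [← h, ← hjc, add_sub_cancel_right]
    simp [extend, hc2]
  refine (F.submatrix id _).rank_mul_le_of_mul_factors (by simp) L (fun V => ψ n (extend V)) ?_
  intro V V' h
  rw [← F.mul_of_ite_snd_eq, ← F.mul_of_ite_snd_eq, ← hφ, ← hφ]
  congr 1
  funext w
  by_cases hw : w.val = n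
  · rw [hw]
    exact h
  · exact hblind w w.2 hw V V'

end Scheme

theorem stmt_5_general
    {𝔽 : Type} [Field 𝔽] [Fintype 𝔽]
    (K L N Nr Kc : ℕ) [NeZero N]
    (hNr : 0 < Nr)
    (hNrN : Nr ≤ N)
    (T : ZMod N → ℕ)
    (ψ : (n : ZMod N) → (Fin (K / N) × ZMod N → Fin L → 𝔽) → (Fin (T n) → 𝔽))
    (hψ : ∀ (n : ZMod N) (W W' : Fin (K / N) × ZMod N → Fin L → 𝔽),
      (∀ c : Fin (K / N) × ZMod N,
        c.2 ∈ (Finset.range (N - Nr + 1)).image (fun j : ℕ => n + (j : ZMod N)) → W c = W' c) →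
      ψ n W = ψ n W')
    (F : Matrix (Fin Kc) (Fin (K / N) × ZMod N) 𝔽)
    (hrankF : F.rank = Kc)
    (hrankcol : ∀ m : ZMod N,
      (F.submatrix id (fun p : Fin (K / N) => (p, m))).rank = min Kc (K / N))
    (hcor : ∀ A : Finset (ZMod N), A.card = Nr →
      ∃ φ : ((n : {m : ZMod N // m ∈ A}) → (Fin (T n.val) → 𝔽)) → Matrix (Fin Kc) (Fin L) 𝔽,
        ∀ W : Fin (K / N) × ZMod N → Fin L → 𝔽,
          φ (fun n => ψ n.val W) = F * Matrix.of W) :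
    ∀ A : Finset (ZMod N), A.card = Nr →
      max (Nr * min Kc (K / N)) Kc * L ≤ ∑ n ∈ A, T n := by
  intro A hA
  have hworker : ∀ n, min Kc (K / N) * L ≤ T n := fun n => by
    simpa only [hrankcol] using rank_submatrix_mul_le_answerLength hNr hNrN ψ hψ F hcor n
  have hsum : Kc * L ≤ ∑ n ∈ A, T n := by
    obtain ⟨φ, hφ⟩ := hcor A hA
    simpa only [hrankF] using rank_mul_le_sum_answerLength ψ F A φ hφ
  rw [← max_mul_mul_right]
  refine max_le ?_ hsum
  calc Nr * min Kc (K / N) * L = ∑ _n ∈ A, min Kc (K / N) * L := by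
        rw [Finset.sum_const, hA, smul_eq_mul, mul_assoc]
    _ ≤ ∑ n ∈ A, T n := Finset.sum_le_sum fun n _ => hworker n

/-- Converse under the cyclic assignment, Theorem 4: with the cyclic
assignment (worker `n ∈ ZMod N` gets the datasets `(p, m)` with `m ∈ {n, …, n + (N − N_r)}`),
if the scheme is correct for a demand matrix `F` of rank `K_c` whose `K/N`-column submatrices
`{(p, m) : p}` all have rank `min(K_c, K/N)`, then for every set `A` of `N_r` workers,
`∑_{n ∈ A} T_n ≥ max( N_r · min(K_c, K/N), K_c ) · L`. -/
theorem stmt_5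
    {𝔽 : Type} [Field 𝔽] [Fintype 𝔽]
    (K L N Nr Kc : ℕ) [NeZero N]
    (hK : 0 < K) (hL : 0 < L) (hNr : 0 < Nr) (hKcpos : 0 < Kc)
    (hNrN : Nr ≤ N) (hKcK : Kc ≤ K) (hNK : N ∣ K)
    (T : ZMod N → ℕ)
    (ψ : (n : ZMod N) → (Fin (K / N) × ZMod N → Fin L → 𝔽) → (Fin (T n) → 𝔽))
    (hψ : ∀ (n : ZMod N) (W W' : Fin (K / N) × ZMod N → Fin L → 𝔽),
      (∀ c : Fin (K / N) × ZMod N,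
        c.2 ∈ (Finset.range (N - Nr + 1)).image (fun j : ℕ => n + (j : ZMod N)) → W c = W' c) →
      ψ n W = ψ n W')
    (F : Matrix (Fin Kc) (Fin (K / N) × ZMod N) 𝔽)
    (hrankF : F.rank = Kc)
    (hrankcol : ∀ m : ZMod N,
      (F.submatrix id (fun p : Fin (K / N) => (p, m))).rank = min Kc (K / N))
    (hcor : ∀ A : Finset (ZMod N), A.card = Nr →
      ∃ φ : ((n : {m : ZMod N // m ∈ A}) → (Fin (T n.val) → 𝔽)) → Matrix (Fin Kc) (Fin L) 𝔽,
        ∀ W : Fin (K / N) × ZMod N → Fin L → 𝔽,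
          φ (fun n => ψ n.val W) = F * Matrix.of W) :
    ∀ A : Finset (ZMod N), A.card = Nr →
      max (Nr * min Kc (K / N)) Kc * L ≤ ∑ n ∈ A, T n :=
  stmt_5_general K L N Nr Kc hNr hNrN T ψ hψ F hrankF hrankcol hcor
end

section
/- (Appendix D, generic determinant with cyclic zero pattern.) Fix integers 2 ≤ N_r ≤ N. For n ∈ ZMod N let \bar Z_n = {n−1, n−2, …, n−(N_r−1)} ⊆ ZMod N (the N_r − 1 residues cyclically preceding n). Let A ⊆ ZMod N with |A| = N_r and fix a ∈ A. Consider the (N_r − 1) × (N_r − 1) matrix M, with rows indexed by A \ {a} and columns indexed by \bar Z_a, over the multivariate polynomial ring over an integral domain in the indeterminates x_{m,c} (m, c ∈ ZMod N), defined by M m c = 0 if c ∈ \bar Z_m and M m c = x_{m,c} otherwise. Then the determinant of M is a nonzero polynomial. -/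
/-!
Specialising `x_{m,c}` to the indicator of the graph of a bijection `τ` from the rows to the
columns turns `M` into a permutation matrix with determinant `± 1`, provided `τ` avoids the
zero pattern. Translating so that `a = 0`, the entry in row `m` and column `-k` (`1 ≤ k < N_r`)
is nonzero iff `N_r ≤ m + k ≤ N` for the representative `m ∈ [1, N)`. Listing the rows as
`m_1 < ⋯ < m_{N_r - 1}` we have `i ≤ m_i ≤ N - N_r + i`, so `m_i ↦ -(N_r - i)` is such a `τ`.
-/

open MvPolynomial Finset

theorem Matrix.det_ne_zero_of_map_eq_permMatrix {n S R : Type*} [Fintype n] [DecidableEq n]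
    [CommRing S] [CommRing R] [Nontrivial R] {M : Matrix n n S} (f : S →+* R)
    (τ : Equiv.Perm n) (h : M.map f = τ.permMatrix R) : M.det ≠ 0 := by
  intro h0
  have hdet := congrArg f h0
  rw [RingHom.map_det, RingHom.mapMatrix_apply, h, Matrix.det_permutation, map_zero] at hdet
  rcases Int.units_eq_one_or (Equiv.Perm.sign τ) with hs | hs <;> simp [hs] at hdet

theorem MvPolynomial.det_ite_zero_X_ne_zero {n σ R : Type*} [Fintype n] [DecidableEq n]
    [CommRing R] [Nontrivial R] (P : n → n → Prop) [∀ i j, Decidable (P i j)]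
    (v : n × n → σ) (hv : Function.Injective v) (τ : Equiv.Perm n) (hτ : ∀ i, ¬P i (τ i)) :
    (Matrix.of fun i j => if P i j then (0 : MvPolynomial σ R) else X (v (i, j))).det ≠ 0 := by
  classical
  refine Matrix.det_ne_zero_of_map_eq_permMatrix
    (eval fun s => if s ∈ Set.range (fun i => v (i, τ i)) then 1 else 0) τ ?_
  ext i j
  by_cases hj : j = τ i
  · subst hj
    simp [hτ i, PEquiv.toMatrix_apply]
  · have hoff : ∀ i', v (i', τ i') ≠ v (i, j) := fun i' hi' => by
      obtain ⟨rfl, rfl⟩ := Prod.ext_iff.mp (hv hi')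
      exact hj rfl
    by_cases hP : P i j <;> simp [hP, hoff, PEquiv.toMatrix_apply, Ne.symm hj]

theorem Finset.card_filter_le_lt_card_filter_le {D : Finset ℕ} {x y : ℕ} (hy : y ∈ D)
    (hxy : x < y) : #(D.filter (· ≤ x)) < #(D.filter (· ≤ y)) := by
  refine card_lt_card ⟨fun z hz => ?_, fun hsub => ?_⟩
  · rw [mem_filter] at hz ⊢
    exact ⟨hz.1, hz.2.trans hxy.le⟩
  · have := (mem_filter.mp (hsub (mem_filter.mpr ⟨hy, le_rfl⟩))).2
    omega

theorem Finset.exists_injOn_add_mem_Ioc {D : Finset ℕ} {N : ℕ} (hD : D ⊆ Ioo 0 N) :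
    ∃ k : ℕ → ℕ, Set.InjOn k D ∧ ∀ x ∈ D, k x ∈ Icc 1 #D ∧ x + k x ∈ Ioc #D N := by
  set rank : ℕ → ℕ := fun x => #(D.filter (· ≤ x))
  have rank_pos : ∀ x ∈ D, 0 < rank x := fun x hx =>
    card_pos.mpr ⟨x, mem_filter.mpr ⟨hx, le_rfl⟩⟩
  have rank_le_card : ∀ x, rank x ≤ #D := fun x => card_filter_le _ _
  have rank_le_self : ∀ x, rank x ≤ x := fun x => by
    simpa using card_le_card (s := D.filter (· ≤ x)) (t := Icc 1 x) fun y hy => by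
      rw [mem_filter] at hy
      exact mem_Icc.mpr ⟨(mem_Ioo.mp (hD hy.1)).1, hy.2⟩
  have card_sub_rank_le : ∀ x, #D - rank x ≤ N - 1 - x := fun x => by
    have hsplit := card_filter_add_card_filter_not (s := D) (· ≤ x)
    have habove := card_le_card (s := D.filter (¬ · ≤ x)) (t := Ioo x N) fun y hy => by
      rw [mem_filter] at hy
      exact mem_Ioo.mpr ⟨by omega, (mem_Ioo.mp (hD hy.1)).2⟩
    rw [Nat.card_Ioo] at habove
    simp only [rank]
    omega
  refine ⟨fun x => #D + 1 - rank x, fun x hx y hy hxy => ?_, fun x hx => ?_⟩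
  · have hrank : rank x = rank y := by
      have := rank_le_card x; have := rank_le_card y; simp only at hxy; omega
    by_contra hne
    rcases Nat.lt_or_gt_of_ne hne with h | h
    · exact (card_filter_le_lt_card_filter_le hy h).ne hrank
    · exact (card_filter_le_lt_card_filter_le hx h).ne' hrank
  · have := rank_pos x hx; have := rank_le_card x; have := rank_le_self x
    have := card_sub_rank_le x; have := (mem_Ioo.mp (hD hx)).2
    simp only [mem_Icc, mem_Ioc]
    omega

def cyclicPredecessors (N k : ℕ) (n : ZMod N) : Finset (ZMod N) :=
  (range k).image fun j : ℕ => n - ((j + 1 : ℕ) : ZMod N)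

theorem mem_cyclicPredecessors_iff {N k : ℕ} [NeZero N] (hk : k < N) {n c : ZMod N} :
    c ∈ cyclicPredecessors N k n ↔ (n - c).val ∈ Icc 1 k := by
  simp only [cyclicPredecessors, mem_image, mem_range, mem_Icc]
  constructor
  · rintro ⟨j, hj, rfl⟩
    rw [sub_sub_cancel, ZMod.val_cast_of_lt (by omega)]
    omega
  · rintro ⟨h1, hk_le⟩
    refine ⟨(n - c).val - 1, by omega, ?_⟩
    rw [Nat.sub_add_cancel h1, ZMod.natCast_zmod_val, sub_sub_cancel]

theorem exists_injOn_mem_cyclicPredecessors_notMem {N : ℕ} [NeZero N] {A : Finset (ZMod N)}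
    {a : ZMod N} (ha : a ∈ A) :
    ∃ g : ZMod N → ZMod N, Set.InjOn g (A.erase a) ∧ ∀ m ∈ A.erase a,
      g m ∈ cyclicPredecessors N (#A - 1) a ∧ g m ∉ cyclicPredecessors N (#A - 1) m := by
  have hA : #A - 1 < N := by
    have := card_le_univ A
    rw [ZMod.card] at this
    have := card_pos.mpr ⟨a, ha⟩
    omega
  set d : ZMod N → ℕ := fun m => (m - a).val
  have hd : Function.Injective d := fun m m' h => sub_left_injective (ZMod.val_injective N h)
  have hdN : (A.erase a).image d ⊆ Ioo 0 N := by
    simp only [subset_iff, mem_image, mem_erase, mem_Ioo]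
    rintro _ ⟨m, ⟨hm, -⟩, rfl⟩
    exact ⟨Nat.pos_of_ne_zero (by simpa [d, ZMod.val_eq_zero, sub_eq_zero] using hm),
      ZMod.val_lt _⟩
  obtain ⟨k, hk_inj, hk⟩ := exists_injOn_add_mem_Ioc hdN
  rw [card_image_of_injective _ hd, card_erase_of_mem ha] at hk
  have hk_val : ∀ m ∈ A.erase a, ((k (d m) : ℕ) : ZMod N).val = k (d m) := fun m hm =>
    ZMod.val_cast_of_lt (by have := (mem_Icc.mp (hk _ (mem_image_of_mem d hm)).1).2; omega)
  refine ⟨fun m => a - k (d m), fun m hm m' hm' h => hd ?_, fun m hm => ⟨?_, ?_⟩⟩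
  · have h := congrArg ZMod.val (sub_right_injective h)
    rw [hk_val m hm, hk_val m' hm'] at h
    exact hk_inj (mem_image_of_mem d hm) (mem_image_of_mem d hm') h
  · rw [mem_cyclicPredecessors_iff hA, sub_sub_cancel, hk_val m hm]
    exact (hk _ (mem_image_of_mem d hm)).1
  · have hsum : m - (a - k (d m)) = ((d m + k (d m) : ℕ) : ZMod N) := by
      push_cast [d, ZMod.natCast_zmod_val]
      ring
    rw [mem_cyclicPredecessors_iff hA, hsum, ZMod.val_natCast, mem_Icc]
    have hmk := mem_Ioc.mp (hk _ (mem_image_of_mem d hm)).2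
    rcases hmk.2.lt_or_eq with hlt | heq
    · rw [Nat.mod_eq_of_lt hlt]
      omega
    · rw [heq, Nat.mod_self]
      omega

theorem stmt_9_general {R : Type} [CommRing R] [IsDomain R]
    (N Nr : ℕ) [NeZero N]
    (A : Finset (ZMod N)) (hA : A.card = Nr) (a : ZMod N) (ha : a ∈ A) :
    let Zbar : ZMod N → Finset (ZMod N) := fun n =>
      (Finset.range (Nr - 1)).image fun j : ℕ => n - ((j + 1 : ℕ) : ZMod N)
    let M : Matrix {m : ZMod N // m ∈ A.erase a} {c : ZMod N // c ∈ Zbar a}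
        (MvPolynomial (ZMod N × ZMod N) R) :=
      fun m c => if (c : ZMod N) ∈ Zbar (m : ZMod N) then 0
        else MvPolynomial.X ((m : ZMod N), (c : ZMod N))
    ∀ e : {c : ZMod N // c ∈ Zbar a} ≃ {m : ZMod N // m ∈ A.erase a},
      (M.submatrix e id).det ≠ 0 := by
  intro Zbar M e
  obtain ⟨g, hg_inj, hg⟩ := exists_injOn_mem_cyclicPredecessors_notMem ha
  rw [hA] at hg
  let f : {m // m ∈ A.erase a} → {c // c ∈ Zbar a} := fun m => ⟨g m, (hg m m.2).1⟩
  have hτ : Function.Injective (f ∘ e) := fun c c' h =>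
    e.injective (Subtype.ext (hg_inj (e c).2 (e c').2 (congrArg Subtype.val h)))
  exact det_ite_zero_X_ne_zero (fun c c' => (c' : ZMod N) ∈ Zbar (e c))
    (fun p => ((e p.1 : ZMod N), (p.2 : ZMod N)))
    (fun p p' h => Prod.ext (e.injective (Subtype.ext (Prod.ext_iff.mp h).1))
      (Subtype.ext (Prod.ext_iff.mp h).2))
    (Equiv.ofBijective _ (Finite.injective_iff_bijective.mp hτ)) fun c => (hg _ (e c).2).2

/-- Appendix D, generic determinant with cyclic zero pattern: for
`2 ≤ N_r ≤ N`, `\bar Z_n = {n−1, …, n−(N_r−1)} ⊆ ZMod N`, `A ⊆ ZMod N` with `|A| = N_r`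
and `a ∈ A`, the `(N_r−1) × (N_r−1)` matrix `M` over the multivariate polynomial ring
(rows indexed by `A \ {a}`, columns by `\bar Z_a`) with `M m c = 0` if `c ∈ \bar Z_m` and
`M m c = x_{m,c}` otherwise, has nonzero determinant (for any identification of the row and
column index types). -/
theorem stmt_9 {R : Type} [CommRing R] [IsDomain R]
    (N Nr : ℕ) [NeZero N] (h2 : 2 ≤ Nr) (hNrN : Nr ≤ N)
    (A : Finset (ZMod N)) (hA : A.card = Nr) (a : ZMod N) (ha : a ∈ A) :
    let Zbar : ZMod N → Finset (ZMod N) := fun n =>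
      (Finset.range (Nr - 1)).image fun j : ℕ => n - ((j + 1 : ℕ) : ZMod N)
    let M : Matrix {m : ZMod N // m ∈ A.erase a} {c : ZMod N // c ∈ Zbar a}
        (MvPolynomial (ZMod N × ZMod N) R) :=
      fun m c => if (c : ZMod N) ∈ Zbar (m : ZMod N) then 0
        else MvPolynomial.X ((m : ZMod N), (c : ZMod N))
    ∀ e : {c : ZMod N // c ∈ Zbar a} ≃ {m : ZMod N // m ∈ A.erase a},
      (M.submatrix e id).det ≠ 0 :=
  stmt_9_general N Nr A hA a ha
end

section
/- (Lemma 3.) Assume N divides K, N_r ≤ N, K_c = (K/N)·N_r, and use the cyclic assignment. Fix A ⊆ ZMod N with |A| = N_r. Then for every sufficiently large prime power q there exists a matrix F ∈ Matrix (Fin K_c) (Fin (K/N × ZMod N)) 𝔽_q such that for every n ∈ A the left null space V_n = {u ∈ 𝔽_q^{K_c} : uᵀ F^{(\bar Z_n)} = 0} has dimension K/N, and the subspaces {V_n : n ∈ A} span 𝔽_q^{K_c} as an internal direct sum. -/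
open Finset Polynomial

private lemma aux_sum_range_two_pow (n : ℕ) : ∑ x ∈ Finset.range n, 2 ^ x + 1 = 2 ^ n := by
  induction n with
  | zero => simp
  | succ n ih => rw [Finset.sum_range_succ, pow_succ]; omega

private lemma aux_two_pow_subset (n : ℕ) :
    ∀ S T : Finset ℕ, S ⊆ Finset.range n → T ⊆ Finset.range n →
      (∑ x ∈ S, 2 ^ x) = (∑ x ∈ T, 2 ^ x) → S = T := by
  induction n with
  | zero =>
    intro S T hS hT _
    simp only [Finset.range_zero, Finset.subset_empty] at hS hT
    rw [hS, hT]
  | succ n ih =>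
    intro S T hS hT h
    have bound : ∀ U : Finset ℕ, U ⊆ Finset.range n → ∑ x ∈ U, 2 ^ x < 2 ^ n := by
      intro U hU
      calc ∑ x ∈ U, 2 ^ x ≤ ∑ x ∈ Finset.range n, 2 ^ x :=
            Finset.sum_le_sum_of_subset hU
        _ < 2 ^ n := by have := aux_sum_range_two_pow n; omega
    have hsub : ∀ U : Finset ℕ, U ⊆ Finset.range (n + 1) → n ∉ U → U ⊆ Finset.range n := by
      intro U hU hn x hx
      have h1 := hU hx
      simp only [Finset.mem_range] at h1 ⊢
      rcases Nat.lt_succ_iff_lt_or_eq.mp h1 with h | rfl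
      · exact h
      · exact absurd hx hn
    by_cases hSn : n ∈ S <;> by_cases hTn : n ∈ T
    · have hS' : S.erase n ⊆ Finset.range n :=
        hsub _ (Finset.Subset.trans (Finset.erase_subset _ _) hS) (Finset.notMem_erase _ _)
      have hT' : T.erase n ⊆ Finset.range n :=
        hsub _ (Finset.Subset.trans (Finset.erase_subset _ _) hT) (Finset.notMem_erase _ _)
      have hS2 : 2 ^ n + ∑ x ∈ S.erase n, 2 ^ x = ∑ x ∈ S, 2 ^ x :=
        Finset.add_sum_erase S (fun x => 2 ^ x) hSn
      have hT2 : 2 ^ n + ∑ x ∈ T.erase n, 2 ^ x = ∑ x ∈ T, 2 ^ x :=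
        Finset.add_sum_erase T (fun x => 2 ^ x) hTn
      have heq : (∑ x ∈ S.erase n, 2 ^ x) = ∑ x ∈ T.erase n, 2 ^ x := by omega
      have := ih _ _ hS' hT' heq
      rw [← Finset.insert_erase hSn, ← Finset.insert_erase hTn, this]
    · exfalso
      have h1 : (2:ℕ) ^ n ≤ ∑ x ∈ S, 2 ^ x := Finset.single_le_sum (fun i _ => Nat.zero_le _) hSn
      have h2 := bound T (hsub _ hT hTn)
      omega
    · exfalso
      have h1 : (2:ℕ) ^ n ≤ ∑ x ∈ T, 2 ^ x := Finset.single_le_sum (fun i _ => Nat.zero_le _) hTn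
      have h2 := bound S (hsub _ hS hSn)
      omega
    · exact ih _ _ (hsub _ hS hSn) (hsub _ hT hTn) h

private lemma aux_two_pow_inj (S T : Finset ℕ)
    (h : (∑ x ∈ S, 2 ^ x) = (∑ x ∈ T, 2 ^ x)) : S = T := by
  set n := (S ∪ T).sup id + 1 with hn
  refine aux_two_pow_subset n S T ?_ ?_ h <;>
  · intro x hx
    simp only [Finset.mem_range, hn]
    have : x ≤ (S ∪ T).sup id := Finset.le_sup (f := id) (by simp [hx])
    omega

private lemma aux_strictMono_add {s : ℕ} {g : Fin s → ℕ} (hg : StrictMono g) :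
    ∀ (k : ℕ) (i j : Fin s), (j : ℕ) = (i : ℕ) + k → g i + k ≤ g j := by
  intro k
  induction k with
  | zero => intro i j hij; have hij' : i = j := Fin.ext (by omega); rw [hij']; omega
  | succ k ihk =>
    intro i j hij
    have hj' : (i : ℕ) + k < s := by have := j.isLt; omega
    have h1 := ihk i ⟨(i : ℕ) + k, hj'⟩ rfl
    have h2 : g ⟨(i : ℕ) + k, hj'⟩ < g j := hg (by simp only [Fin.lt_def, Fin.val_mk]; omega)
    omega

private lemma aux_val_neg (N : ℕ) [NeZero N] (x : ℕ) (h1 : 1 ≤ x) (h2 : x ≤ N) :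
    ((-(x : ZMod N)) : ZMod N).val = N - x := by
  rcases eq_or_lt_of_le h2 with rfl | hlt
  · simp [ZMod.natCast_self]
  · have hval : ((x : ZMod N)).val = x := ZMod.val_cast_of_lt hlt
    have hx0 : (x : ZMod N) ≠ 0 := by
      intro h0
      rw [h0, ZMod.val_zero] at hval
      omega
    rw [ZMod.neg_val, if_neg hx0, hval]

/-- the injective code of pairs -/
private def auxCode (N : ℕ) (a m : ZMod N) : ℕ := a.val * N + m.val

private lemma aux_code_inj (N : ℕ) [NeZero N] (a m a' m' : ZMod N)
    (h : auxCode N a m = auxCode N a' m') : a = a' ∧ m = m' := by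
  have h1 : m.val < N := ZMod.val_lt m
  have h2 : m'.val < N := ZMod.val_lt m'
  have hN : 0 < N := Nat.pos_of_ne_zero (NeZero.ne N)
  have e1 : m.val + a.val * N = m'.val + a'.val * N := by
    rw [Nat.add_comm, Nat.add_comm m'.val]; exact h
  have hdiv := congrArg (· / N) e1
  simp only [Nat.add_mul_div_right _ _ hN, Nat.div_eq_of_lt h1, Nat.div_eq_of_lt h2,
    Nat.zero_add] at hdiv
  have hm : m.val = m'.val := by rw [hdiv] at e1; exact Nat.add_right_cancel e1
  exact ⟨ZMod.val_injective N hdiv, ZMod.val_injective N hm⟩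

private lemma aux_code_le (N : ℕ) [NeZero N] (a m : ZMod N) : auxCode N a m ≤ N * N := by
  have hN : 0 < N := Nat.pos_of_ne_zero (NeZero.ne N)
  have h1 : a.val ≤ N - 1 := by have := ZMod.val_lt a; omega
  have h2 : m.val ≤ N - 1 := by have := ZMod.val_lt m; omega
  have h3 : a.val * N ≤ (N - 1) * N := Nat.mul_le_mul_right _ h1
  have h4 : (N - 1) * N = N * N - N := Nat.sub_one_mul N N
  have h5 : N ≤ N * N := Nat.le_mul_of_pos_left N hN
  unfold auxCode
  omega

/-- the window of worker `n` -/
private def auxI (N Nr : ℕ) (n : ZMod N) : Finset (ZMod N) :=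
  (Finset.range (N - Nr + 1)).image fun j : ℕ => n + (j : ZMod N)

private lemma aux_mem_I (N Nr : ℕ) [NeZero N] (hNr : 0 < Nr) (hNrN : Nr ≤ N) (n m : ZMod N) :
    m ∈ auxI N Nr n ↔ (m - n).val ≤ N - Nr := by
  constructor
  · intro h
    simp only [auxI, Finset.mem_image, Finset.mem_range] at h
    obtain ⟨j, hj, rfl⟩ := h
    have h1 : n + (j : ZMod N) - n = (j : ZMod N) := by ring
    rw [h1, ZMod.val_cast_of_lt (by omega : j < N)]
    omega
  · intro h
    simp only [auxI, Finset.mem_image, Finset.mem_range]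
    refine ⟨(m - n).val, ?_, ?_⟩
    · have := ZMod.val_lt (m - n); omega
    · have h1 : (((m - n).val : ℕ) : ZMod N) = m - n := by
        rw [ZMod.natCast_val, ZMod.cast_id]
      rw [h1]; ring

/-- enumeration of `Fin Nr` avoiding `x` -/
private def auxEmb (Nr : ℕ) (hNr1 : Nr - 1 + 1 = Nr) (x : Fin Nr) (r : Fin (Nr - 1)) : Fin Nr :=
  Fin.cast hNr1 ((Fin.cast hNr1.symm x).succAbove r)

private lemma auxEmb_ne (Nr : ℕ) (hNr1 : Nr - 1 + 1 = Nr) (x : Fin Nr) (r : Fin (Nr - 1)) :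
    auxEmb Nr hNr1 x r ≠ x := by
  intro h
  apply Fin.succAbove_ne (Fin.cast hNr1.symm x) r
  exact Fin.ext (by simpa [Fin.coe_cast, auxEmb] using congrArg Fin.val h)

private lemma auxEmb_inj (Nr : ℕ) (hNr1 : Nr - 1 + 1 = Nr) (x : Fin Nr) :
    Function.Injective (auxEmb Nr hNr1 x) := by
  intro r r' h
  exact Fin.succAbove_right_injective
    (Fin.ext (by simpa [Fin.coe_cast, auxEmb] using congrArg Fin.val h))

private lemma auxEmb_surj (Nr : ℕ) (hNr1 : Nr - 1 + 1 = Nr) (x i : Fin Nr) (h : i ≠ x) :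
    ∃ r, auxEmb Nr hNr1 x r = i := by
  have hne : Fin.cast hNr1.symm i ≠ Fin.cast hNr1.symm x := fun hc =>
    h (Fin.ext (by simpa [Fin.coe_cast] using congrArg Fin.val hc))
  obtain ⟨r, hr⟩ := Fin.exists_succAbove_eq hne
  exact ⟨r, Fin.ext (by simpa [Fin.coe_cast, auxEmb] using congrArg Fin.val hr)⟩

/-- the chosen columns outside the window of `n` -/
private def auxMcol (N Nr : ℕ) (n : ZMod N) (j : Fin (Nr - 1)) : ZMod N :=
  n - (((j : ℕ) + 1 : ℕ) : ZMod N)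

private lemma auxMcol_sub (N Nr : ℕ) [NeZero N] (hNr : 0 < Nr) (hNrN : Nr ≤ N)
    (n : ZMod N) (j : Fin (Nr - 1)) :
    (auxMcol N Nr n j - n).val = N - ((j : ℕ) + 1) := by
  have h1 : auxMcol N Nr n j - n = -((((j : ℕ) + 1 : ℕ)) : ZMod N) := by
    simp only [auxMcol]; ring
  have hj := j.isLt
  rw [h1, aux_val_neg N _ (by omega) (by omega)]

private lemma auxMcol_notMem (N Nr : ℕ) [NeZero N] (hNr : 0 < Nr) (hNrN : Nr ≤ N)
    (n : ZMod N) (j : Fin (Nr - 1)) : auxMcol N Nr n j ∉ auxI N Nr n := by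
  rw [aux_mem_I N Nr hNr hNrN, auxMcol_sub N Nr hNr hNrN]
  have := j.isLt
  omega

private lemma auxMcol_inj (N Nr : ℕ) [NeZero N] (hNr : 0 < Nr) (hNrN : Nr ≤ N) (n : ZMod N) :
    Function.Injective (auxMcol N Nr n) := by
  intro j j' h
  have h2 : ((((j : ℕ) + 1 : ℕ)) : ZMod N) = ((((j' : ℕ) + 1 : ℕ)) : ZMod N) := by
    simp only [auxMcol] at h
    exact sub_right_injective h
  have hj := j.isLt
  have hj' := j'.isLt
  have h3 := congrArg ZMod.val h2
  rw [ZMod.val_cast_of_lt (by omega), ZMod.val_cast_of_lt (by omega)] at h3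
  exact Fin.ext (by omega)

/-- the polynomial generator matrix -/
private noncomputable def auxGp (N Nr : ℕ) (𝔽 : Type) [Field 𝔽] (τs : Fin Nr → ZMod N)
    (i : Fin Nr) (m : ZMod N) : Polynomial 𝔽 :=
  if m ∈ auxI N Nr (τs i) then X ^ (2 ^ auxCode N (τs i) m) else 0

/-- the submatrix whose determinant must not vanish -/
private noncomputable def auxDp (N Nr : ℕ) (hNr1 : Nr - 1 + 1 = Nr) (𝔽 : Type) [Field 𝔽]
    (τs : Fin Nr → ZMod N) (x : Fin Nr) :
    Matrix (Fin (Nr - 1)) (Fin (Nr - 1)) (Polynomial 𝔽) :=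
  Matrix.of fun r j => auxGp N Nr 𝔽 τs (auxEmb Nr hNr1 x r) (auxMcol N Nr (τs x) j)

private lemma aux_deg_le (N Nr : ℕ) [NeZero N] (hNrN : Nr ≤ N) (hNr1 : Nr - 1 + 1 = Nr)
    (𝔽 : Type) [Field 𝔽] (τs : Fin Nr → ZMod N) (x : Fin Nr) :
    (auxDp N Nr hNr1 𝔽 τs x).det.natDegree ≤ N * 2 ^ (N * N) := by
  rw [Matrix.det_apply']
  apply Polynomial.natDegree_sum_le_of_forall_le
  intro σ _
  refine le_trans (Polynomial.natDegree_mul_le) ?_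
  rw [Polynomial.natDegree_intCast, zero_add]
  refine le_trans (Polynomial.natDegree_prod_le _ _) ?_
  have hentry : ∀ j : Fin (Nr - 1),
      (auxDp N Nr hNr1 𝔽 τs x (σ j) j).natDegree ≤ 2 ^ (N * N) := by
    intro j
    simp only [auxDp, auxGp, Matrix.of_apply]
    split_ifs with h
    · rw [Polynomial.natDegree_X_pow]
      exact Nat.pow_le_pow_right (by norm_num) (aux_code_le N _ _)
    · simp
  calc ∑ j, (auxDp N Nr hNr1 𝔽 τs x (σ j) j).natDegree
      ≤ ∑ _j : Fin (Nr - 1), 2 ^ (N * N) := Finset.sum_le_sum fun j _ => hentry j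
    _ = (Nr - 1) * 2 ^ (N * N) := by
        rw [Finset.sum_const, Finset.card_univ, Fintype.card_fin, smul_eq_mul]
    _ ≤ N * 2 ^ (N * N) := Nat.mul_le_mul_right _ (by omega)

private lemma aux_det_ne (N Nr : ℕ) [NeZero N] (hNr : 0 < Nr) (hNrN : Nr ≤ N)
    (hNr1 : Nr - 1 + 1 = Nr) (𝔽 : Type) [Field 𝔽] (τs : Fin Nr → ZMod N)
    (hτs : Function.Injective τs) (x : Fin Nr) :
    (auxDp N Nr hNr1 𝔽 τs x).det ≠ 0 := by
  classical
  set nn : ZMod N := τs x with hnn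
  -- the distances of the rows from the window center
  set dval : Fin (Nr - 1) → ℕ := fun r => (τs (auxEmb Nr hNr1 x r) - nn).val with hdval
  have dval_pos : ∀ r, 1 ≤ dval r := by
    intro r
    rcases Nat.eq_zero_or_pos (dval r) with h | h
    · exfalso
      have h2 := (ZMod.val_eq_zero _).mp h
      rw [sub_eq_zero] at h2
      exact auxEmb_ne Nr hNr1 x r (hτs h2)
    · omega
  have dval_lt : ∀ r, dval r ≤ N - 1 := by
    intro r
    have h1 := ZMod.val_lt (τs (auxEmb Nr hNr1 x r) - nn)
    have h2 := dval_pos r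
    simp only [hdval] at h2 ⊢
    omega
  have dval_inj : Function.Injective dval := by
    intro r r' h
    simp only [hdval] at h
    have h1 := ZMod.val_injective N h
    have h2 : τs (auxEmb Nr hNr1 x r) = τs (auxEmb Nr hNr1 x r') := by
      have := congrArg (· + nn) h1; simpa using this
    exact auxEmb_inj Nr hNr1 x (hτs h2)
  set π : Equiv.Perm (Fin (Nr - 1)) := Tuple.sort dval with hπ
  have hsm : StrictMono (dval ∘ π) :=
    (Tuple.monotone_sort dval).strictMono_of_injective (dval_inj.comp π.injective)
  set σ₀ : Equiv.Perm (Fin (Nr - 1)) := Fin.revPerm.trans π with hσ₀def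
  have hσ₀app : ∀ j, σ₀ j = π (Fin.rev j) := fun j => rfl
  have hbound : ∀ j : Fin (Nr - 1),
      Nr ≤ ((j : ℕ) + 1) + dval (σ₀ j) ∧ ((j : ℕ) + 1) + dval (σ₀ j) ≤ N := by
    intro j
    have hj1 : (Fin.rev j : ℕ) = (Nr - 1) - ((j : ℕ) + 1) := Fin.val_rev j
    have hjlt := j.isLt
    have hlow : (Fin.rev j : ℕ) + 1 ≤ dval (σ₀ j) := by
      have h1 := aux_strictMono_add hsm (Fin.rev j : ℕ) ⟨0, j.pos⟩ (Fin.rev j) (by simp)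
      simp only [Function.comp_apply] at h1
      have h2 := dval_pos (π ⟨0, j.pos⟩)
      rw [hσ₀app]
      omega
    have hhigh : dval (σ₀ j) + ((Nr - 1 - 1) - (Fin.rev j : ℕ)) ≤ N - 1 := by
      have hlast : Nr - 1 - 1 < Nr - 1 := by have := j.pos; omega
      have h1 := aux_strictMono_add hsm ((Nr - 1 - 1) - (Fin.rev j : ℕ)) (Fin.rev j)
        ⟨Nr - 1 - 1, hlast⟩ (by simp only [Fin.val_mk]; omega)
      simp only [Function.comp_apply] at h1
      have h2 := dval_lt (π ⟨Nr - 1 - 1, hlast⟩)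
      rw [hσ₀app]
      omega
    rw [hσ₀app] at hlow hhigh ⊢
    omega
  have allowed₀ : ∀ j, auxMcol N Nr nn j ∈ auxI N Nr (τs (auxEmb Nr hNr1 x (σ₀ j))) := by
    intro j
    rw [aux_mem_I N Nr hNr hNrN]
    have hd : ((dval (σ₀ j) : ℕ) : ZMod N) = τs (auxEmb Nr hNr1 x (σ₀ j)) - nn := by
      simp only [hdval]
      rw [ZMod.natCast_val, ZMod.cast_id]
    have hcast : ((((j : ℕ) + 1) + dval (σ₀ j) : ℕ) : ZMod N)
        = ((((j : ℕ) + 1 : ℕ)) : ZMod N) + ((dval (σ₀ j) : ℕ) : ZMod N) := by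
      push_cast; ring
    have hsub : auxMcol N Nr nn j - τs (auxEmb Nr hNr1 x (σ₀ j))
        = -((((j : ℕ) + 1) + dval (σ₀ j) : ℕ) : ZMod N) := by
      simp only [auxMcol]
      rw [hcast, hd]
      ring
    rw [hsub, aux_val_neg N _ (by have := (hbound j).1; omega) ((hbound j).2)]
    have := (hbound j).1
    omega
  -- the target coefficient
  set w₀ : ℕ := ∑ j, 2 ^ auxCode N (τs (auxEmb Nr hNr1 x (σ₀ j))) (auxMcol N Nr nn j) with hw₀
  have hterm : ∀ σ : Equiv.Perm (Fin (Nr - 1)),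
      (∏ j, auxDp N Nr hNr1 𝔽 τs x (σ j) j) =
        if ∀ j, auxMcol N Nr nn j ∈ auxI N Nr (τs (auxEmb Nr hNr1 x (σ j)))
        then (X : Polynomial 𝔽) ^
          (∑ j, 2 ^ auxCode N (τs (auxEmb Nr hNr1 x (σ j))) (auxMcol N Nr nn j))
        else 0 := by
    intro σ
    split_ifs with hall
    · rw [← Finset.prod_pow_eq_pow_sum]
      refine Finset.prod_congr rfl fun j _ => ?_
      simp only [auxDp, auxGp, Matrix.of_apply, ← hnn]
      rw [if_pos (hall j)]
    · obtain ⟨j, hj⟩ := not_forall.mp hall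
      apply Finset.prod_eq_zero (Finset.mem_univ j)
      simp only [auxDp, auxGp, Matrix.of_apply, ← hnn]
      rw [if_neg hj]
  have hfinj : ∀ (σ : Equiv.Perm (Fin (Nr - 1))) (j j' : Fin (Nr - 1)),
      auxCode N (τs (auxEmb Nr hNr1 x (σ j))) (auxMcol N Nr nn j)
        = auxCode N (τs (auxEmb Nr hNr1 x (σ j'))) (auxMcol N Nr nn j') → j = j' := by
    intro σ j j' h
    exact auxMcol_inj N Nr hNr hNrN nn (aux_code_inj N _ _ _ _ h).2
  have hsign : ((Equiv.Perm.sign σ₀ : ℤ) : 𝔽) ≠ 0 := by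
    rcases Int.units_eq_one_or (Equiv.Perm.sign σ₀) with h | h <;> rw [h] <;> simp
  have hco : (auxDp N Nr hNr1 𝔽 τs x).det.coeff w₀ = ((Equiv.Perm.sign σ₀ : ℤ) : 𝔽) := by
    rw [Matrix.det_apply', Polynomial.finset_sum_coeff]
    refine (Finset.sum_eq_single σ₀ ?_ ?_).trans ?_
    · intro σ _ hσ
      rw [← Polynomial.C_eq_intCast, Polynomial.coeff_C_mul, hterm σ]
      split_ifs with hall
      · rw [Polynomial.coeff_X_pow, if_neg, mul_zero]
        intro hsum
        apply hσ
        have him := aux_two_pow_inj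
          (Finset.image (fun j => auxCode N (τs (auxEmb Nr hNr1 x (σ j))) (auxMcol N Nr nn j))
            Finset.univ)
          (Finset.image (fun j => auxCode N (τs (auxEmb Nr hNr1 x (σ₀ j))) (auxMcol N Nr nn j))
            Finset.univ)
          (by
            rw [Finset.sum_image (fun j _ j' _ h => hfinj σ j j' h),
              Finset.sum_image (fun j _ j' _ h => hfinj σ₀ j j' h)]
            rw [← hsum])
        refine Equiv.ext fun j => ?_
        have hmem : auxCode N (τs (auxEmb Nr hNr1 x (σ j))) (auxMcol N Nr nn j) ∈
            Finset.image (fun j => auxCode N (τs (auxEmb Nr hNr1 x (σ₀ j))) (auxMcol N Nr nn j))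
              Finset.univ := by
          rw [← him]
          exact Finset.mem_image_of_mem _ (Finset.mem_univ j)
        obtain ⟨j', _, hj'⟩ := Finset.mem_image.mp hmem
        obtain ⟨hc1, hc2⟩ := aux_code_inj N _ _ _ _ hj'
        have hjj : j' = j := auxMcol_inj N Nr hNr hNrN nn hc2
        rw [hjj] at hc1
        exact (auxEmb_inj Nr hNr1 x (hτs hc1)).symm
      · rw [Polynomial.coeff_zero, mul_zero]
    · intro h; exact absurd (Finset.mem_univ σ₀) h
    · rw [← Polynomial.C_eq_intCast, Polynomial.coeff_C_mul, hterm σ₀, if_pos allowed₀,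
        Polynomial.coeff_X_pow, if_pos hw₀, mul_one]
  intro h0
  rw [h0, Polynomial.coeff_zero] at hco
  exact hsign hco.symm

set_option maxHeartbeats 1000000 in
/-- Lemma 3: with the cyclic assignment, `K_c = (K/N)·N_r` and a fixed set
`A` of `N_r` workers, for every sufficiently large finite field `𝔽_q` there exists a matrix
`F` such that for every `n ∈ A` the left null space `V_n` of `F^{(\bar Z_n)}` has dimension
`K/N`, and the subspaces `{V_n : n ∈ A}` span `𝔽_q^{K_c}` as an internal direct sum. -/
theorem stmt_10 (N Nr K : ℕ) [NeZero N] (hNr : 0 < Nr) (hNrN : Nr ≤ N) (hNK : N ∣ K)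
    (Kc : ℕ) (hKc : Kc = K / N * Nr)
    (A : Finset (ZMod N)) (hA : A.card = Nr) :
    ∃ q₀ : ℕ, ∀ (𝔽 : Type) [Field 𝔽] [Fintype 𝔽], q₀ ≤ Fintype.card 𝔽 →
      ∃ F : Matrix (Fin Kc) (Fin (K / N) × ZMod N) 𝔽,
        let Z : ZMod N → Finset (Fin (K / N) × ZMod N) := fun n =>
          Finset.univ ×ˢ ((Finset.range (N - Nr + 1)).image fun j : ℕ => n + (j : ZMod N))
        let V : ZMod N → Submodule 𝔽 (Fin Kc → 𝔽) := fun n =>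
          LinearMap.ker
            (Matrix.vecMulLinear (F.submatrix id (fun c : {x // x ∈ (Z n)ᶜ} => c.val)))
        (∀ n ∈ A, Module.finrank 𝔽 (V n) = K / N) ∧
        DirectSum.IsInternal (fun n : {m : ZMod N // m ∈ A} => V n.val) := by
  classical
  have hN : 0 < N := Nat.pos_of_ne_zero (NeZero.ne N)
  have hNr1 : Nr - 1 + 1 = Nr := Nat.succ_pred_eq_of_pos hNr
  refine ⟨N * N * 2 ^ (N * N) + 1, ?_⟩
  intro 𝔽 _ _ hcard
  set e : Fin Kc ≃ Fin (K / N) × Fin Nr := (finCongr hKc).trans finProdFinEquiv.symm with he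
  set τ : {m : ZMod N // m ∈ A} ≃ Fin Nr := A.equivFin.trans (finCongr hA) with hτ
  set τs : Fin Nr → ZMod N := fun i => ((τ.symm i : {m : ZMod N // m ∈ A}) : ZMod N) with hτs
  have hτs_inj : Function.Injective τs := by
    intro i i' h
    exact τ.symm.injective (Subtype.ext h)
  -- choice of a good evaluation point
  set Q : Polynomial 𝔽 := ∏ x : Fin Nr, (auxDp N Nr hNr1 𝔽 τs x).det with hQ
  have hQ0 : Q ≠ 0 :=
    Finset.prod_ne_zero_iff.mpr fun x _ => aux_det_ne N Nr hNr hNrN hNr1 𝔽 τs hτs_inj x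
  have hdegQ : Q.natDegree ≤ N * N * 2 ^ (N * N) := by
    refine le_trans (Polynomial.natDegree_prod_le _ _) ?_
    calc ∑ x : Fin Nr, (auxDp N Nr hNr1 𝔽 τs x).det.natDegree
        ≤ ∑ _x : Fin Nr, N * 2 ^ (N * N) :=
          Finset.sum_le_sum fun x _ => aux_deg_le N Nr hNrN hNr1 𝔽 τs x
      _ = Nr * (N * 2 ^ (N * N)) := by
          rw [Finset.sum_const, Finset.card_univ, Fintype.card_fin, smul_eq_mul]
      _ ≤ N * (N * 2 ^ (N * N)) := Nat.mul_le_mul_right _ hNrN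
      _ = N * N * 2 ^ (N * N) := by ring
  obtain ⟨t, ht⟩ : ∃ t : 𝔽, Polynomial.eval t Q ≠ 0 := by
    by_contra hcon
    push_neg at hcon
    have hsubset : (Finset.univ : Finset 𝔽) ⊆ Q.roots.toFinset := by
      intro t _
      exact Multiset.mem_toFinset.mpr (Polynomial.mem_roots'.mpr ⟨hQ0, hcon t⟩)
    have h1 := Finset.card_le_card hsubset
    rw [Finset.card_univ] at h1
    have h2 := Multiset.toFinset_card_le Q.roots
    have h3 := Polynomial.card_roots' Q
    omega
  have hteval : ∀ x : Fin Nr, Polynomial.eval t ((auxDp N Nr hNr1 𝔽 τs x).det) ≠ 0 := by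
    intro x h0
    apply ht
    rw [hQ, Polynomial.eval_prod]
    exact Finset.prod_eq_zero (Finset.mem_univ x) h0
  -- the generator matrix over 𝔽
  set G : Fin Nr → ZMod N → 𝔽 := fun i m => Polynomial.eval t (auxGp N Nr 𝔽 τs i m) with hG
  have hdetG : ∀ x : Fin Nr,
      (Matrix.of fun r j => G (auxEmb Nr hNr1 x r) (auxMcol N Nr (τs x) j)).det ≠ 0 := by
    intro x
    have hmap : (Matrix.of fun r j => G (auxEmb Nr hNr1 x r) (auxMcol N Nr (τs x) j))
        = (auxDp N Nr hNr1 𝔽 τs x).map (Polynomial.eval t) := by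
      ext r j
      simp [hG, auxDp, Matrix.map_apply]
    rw [hmap, ← Polynomial.coe_evalRingHom, ← RingHom.mapMatrix_apply, ← RingHom.map_det]
    simpa [Polynomial.coe_evalRingHom] using hteval x
  have hGrow0 : ∀ (i : Fin Nr) (m : ZMod N), m ∉ auxI N Nr (τs i) → G i m = 0 := by
    intro i m hm
    simp only [hG, auxGp]
    rw [if_neg hm]
    simp
  set F : Matrix (Fin Kc) (Fin (K / N) × ZMod N) 𝔽 :=
    Matrix.of fun r c => if (e r).1 = c.1 then G (e r).2 c.2 else 0 with hF
  refine ⟨F, ?_⟩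
  intro Z V
  have hZc : ∀ (n : ZMod N) (p : Fin (K / N)) (m : ZMod N),
      ((p, m) ∈ (Z n)ᶜ) ↔ m ∉ auxI N Nr n := by
    intro n p m
    simp [Z, auxI, Finset.mem_product]
  have key : ∀ (u : Fin Kc → 𝔽) (p : Fin (K / N)) (m : ZMod N),
      (∑ r, u r * F r (p, m)) = ∑ i : Fin Nr, u (e.symm (p, i)) * G i m := by
    intro u p m
    calc (∑ r, u r * F r (p, m))
        = ∑ q : Fin (K / N) × Fin Nr, u (e.symm q) * F (e.symm q) (p, m) :=
          (Equiv.sum_comp e.symm fun r => u r * F r (p, m)).symm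
      _ = ∑ q : Fin (K / N) × Fin Nr, (if q.1 = p then u (e.symm q) * G q.2 m else 0) := by
          refine Finset.sum_congr rfl fun q _ => ?_
          simp only [hF, Matrix.of_apply, Equiv.apply_symm_apply]
          rw [mul_ite, mul_zero]
      _ = ∑ i : Fin Nr, u (e.symm (p, i)) * G i m := by
          rw [Fintype.sum_prod_type]
          refine (Finset.sum_eq_single p ?_ ?_).trans ?_
          · intro p' _ hp'
            exact Finset.sum_eq_zero fun i _ => if_neg hp'
          · intro h; exact absurd (Finset.mem_univ p) h
          · simp
  have hVmem : ∀ (n : ZMod N) (u : Fin Kc → 𝔽),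
      u ∈ V n ↔ ∀ (p : Fin (K / N)) (m : ZMod N), m ∉ auxI N Nr n →
        (∑ i : Fin Nr, u (e.symm (p, i)) * G i m) = 0 := by
    intro n u
    simp only [V, LinearMap.mem_ker, Matrix.vecMulLinear_apply, funext_iff, Pi.zero_apply]
    constructor
    · intro h p m hm
      have h1 := h ⟨(p, m), (hZc n p m).mpr hm⟩
      rw [← key u p m]
      simpa [Matrix.vecMul, dotProduct, Matrix.submatrix_apply] using h1
    · rintro h ⟨⟨p, m⟩, hc⟩
      have hm : m ∉ auxI N Nr n := (hZc n p m).mp hc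
      have h2 := h p m hm
      rw [← key u p m] at h2
      simpa [Matrix.vecMul, dotProduct, Matrix.submatrix_apply] using h2
  -- explicit description of the kernels
  have hVn : ∀ b : {m : ZMod N // m ∈ A},
      V (b : ZMod N) = Submodule.span 𝔽
        (Set.range fun p : Fin (K / N) => Pi.single (e.symm (p, τ b)) (1 : 𝔽)) := by
    intro b
    have hbτ : τs (τ b) = (b : ZMod N) := by
      simp only [hτs]
      rw [Equiv.symm_apply_apply]
    apply le_antisymm
    · intro u hu
      rw [hVmem] at hu
      have hw0 : ∀ (p : Fin (K / N)) (i : Fin Nr), i ≠ τ b → u (e.symm (p, i)) = 0 := by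
        intro p i hi
        obtain ⟨r₀, hr₀⟩ := auxEmb_surj Nr hNr1 (τ b) i hi
        have hker : ∀ j : Fin (Nr - 1),
            (∑ r : Fin (Nr - 1), u (e.symm (p, auxEmb Nr hNr1 (τ b) r))
              * G (auxEmb Nr hNr1 (τ b) r) (auxMcol N Nr (b : ZMod N) j)) = 0 := by
          intro j
          have hnot : auxMcol N Nr (b : ZMod N) j ∉ auxI N Nr (b : ZMod N) :=
            auxMcol_notMem N Nr hNr hNrN _ j
          have h1 := hu p (auxMcol N Nr (b : ZMod N) j) hnot
          have h2 : G (τ b) (auxMcol N Nr (b : ZMod N) j) = 0 := by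
            apply hGrow0
            rw [hbτ]
            exact hnot
          have h3 : (∑ i : Fin Nr, u (e.symm (p, i)) * G i (auxMcol N Nr (b : ZMod N) j))
              = u (e.symm (p, τ b)) * G (τ b) (auxMcol N Nr (b : ZMod N) j)
                + ∑ i ∈ Finset.univ.erase (τ b),
                    u (e.symm (p, i)) * G i (auxMcol N Nr (b : ZMod N) j) :=
            (Finset.add_sum_erase _ _ (Finset.mem_univ _)).symm
          have h4 : (∑ i ∈ Finset.univ.erase (τ b),
              u (e.symm (p, i)) * G i (auxMcol N Nr (b : ZMod N) j))
              = ∑ r : Fin (Nr - 1), u (e.symm (p, auxEmb Nr hNr1 (τ b) r))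
                  * G (auxEmb Nr hNr1 (τ b) r) (auxMcol N Nr (b : ZMod N) j) := by
            refine (Finset.sum_nbij (fun r => auxEmb Nr hNr1 (τ b) r) ?_ ?_ ?_ ?_).symm
            · intro r _
              exact Finset.mem_erase.mpr ⟨auxEmb_ne Nr hNr1 (τ b) r, Finset.mem_univ _⟩
            · intro r _ r' _ h
              exact auxEmb_inj Nr hNr1 (τ b) h
            · intro i hi
              obtain ⟨r, hr⟩ := auxEmb_surj Nr hNr1 (τ b) i (Finset.mem_erase.mp hi).1
              exact ⟨r, by simp, hr⟩
            · intro r _; rfl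
          rw [h3, h2, mul_zero, zero_add, h4] at h1
          exact h1
        have hvec : Matrix.vecMul (fun r => u (e.symm (p, auxEmb Nr hNr1 (τ b) r)))
            (Matrix.of fun r j => G (auxEmb Nr hNr1 (τ b) r) (auxMcol N Nr (τs (τ b)) j))
            = 0 := by
          funext j
          simpa [Matrix.vecMul, dotProduct, hbτ] using hker j
        have h0 := Matrix.eq_zero_of_vecMul_eq_zero (hdetG (τ b)) hvec
        have h5 := congrFun h0 r₀
        simpa [hr₀] using h5
      have hdecomp : u = ∑ p : Fin (K / N),
          u (e.symm (p, τ b)) • (Pi.single (e.symm (p, τ b)) (1 : 𝔽) : Fin Kc → 𝔽) := by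
        funext r
        rw [Finset.sum_apply]
        by_cases h2 : (e r).2 = τ b
        · symm
          refine (Finset.sum_eq_single (e r).1 ?_ ?_).trans ?_
          · intro p' _ hp'
            have hne : r ≠ e.symm (p', τ b) := by
              intro hre
              apply hp'
              have hr2 : e r = (p', τ b) := by rw [hre, Equiv.apply_symm_apply]
              rw [hr2]
            simp [Pi.single_apply, hne]
          · intro h; exact absurd (Finset.mem_univ (e r).1) h
          · have hr : e.symm ((e r).1, τ b) = r := by
              rw [← h2, Prod.mk.eta, Equiv.symm_apply_apply]
            simp [hr, Pi.single_eq_same]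
        · have hur : u r = 0 := by
            have h3 := hw0 (e r).1 (e r).2 h2
            rwa [Prod.mk.eta, Equiv.symm_apply_apply] at h3
          rw [hur]
          symm
          apply Finset.sum_eq_zero
          intro p' _
          have hne : r ≠ e.symm (p', τ b) := by
            intro hre
            apply h2
            have hr2 : e r = (p', τ b) := by rw [hre, Equiv.apply_symm_apply]
            rw [hr2]
          simp [Pi.single_apply, hne]
      rw [hdecomp]
      exact Submodule.sum_mem _ fun p _ =>
        Submodule.smul_mem _ _ (Submodule.subset_span ⟨p, rfl⟩)
    · rw [Submodule.span_le]
      rintro _ ⟨p₀, rfl⟩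
      rw [SetLike.mem_coe, hVmem]
      intro p m hm
      have hG0 : G (τ b) m = 0 := by
        apply hGrow0; rw [hbτ]; exact hm
      refine (Finset.sum_eq_single (τ b) ?_ ?_).trans ?_
      · intro i _ hi
        have hne : e.symm (p, i) ≠ e.symm (p₀, τ b) := by
          intro h
          exact hi (congrArg Prod.snd (e.symm.injective h))
        simp only [Pi.single_apply, if_neg hne, zero_mul]
      · intro h; exact absurd (Finset.mem_univ (τ b)) h
      · rw [hG0, mul_zero]
  -- the independent family of standard basis vectors
  have hsingle_li : LinearIndependent 𝔽
      (fun q : Fin (K / N) × Fin Nr => (Pi.single (e.symm q) (1 : 𝔽) : Fin Kc → 𝔽)) := by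
    have hb := (Pi.basisFun 𝔽 (Fin Kc)).linearIndependent
    have hcomp := hb.comp (fun q : Fin (K / N) × Fin Nr => e.symm q) e.symm.injective
    have heq : (fun q : Fin (K / N) × Fin Nr => (Pi.single (e.symm q) (1 : 𝔽) : Fin Kc → 𝔽))
        = fun q => (Pi.basisFun 𝔽 (Fin Kc)) (e.symm q) := by
      funext q; rw [Pi.basisFun_apply]
    rw [heq]; exact hcomp
  constructor
  · intro n hn
    rw [hVn ⟨n, hn⟩]
    have hli : LinearIndependent 𝔽
        (fun p : Fin (K / N) => (Pi.single (e.symm (p, τ ⟨n, hn⟩)) (1 : 𝔽) : Fin Kc → 𝔽)) :=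
      hsingle_li.comp (fun p : Fin (K / N) => (p, τ ⟨n, hn⟩))
        (fun p p' h => congrArg Prod.fst h)
    rw [finrank_span_eq_card hli, Fintype.card_fin]
  · rw [DirectSum.isInternal_submodule_iff_iSupIndep_and_iSup_eq_top]
    constructor
    · rw [iSupIndep_def]
      intro b
      have h1 : V (b : ZMod N) ≤ Submodule.span 𝔽
          ((fun q : Fin (K / N) × Fin Nr => Pi.single (e.symm q) (1 : 𝔽)) ''
            {q | q.2 = τ b}) := by
        rw [hVn b]
        apply Submodule.span_le.mpr
        rintro _ ⟨p, rfl⟩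
        exact Submodule.subset_span ⟨(p, τ b), rfl, rfl⟩
      have h2 : (⨆ (c : {m : ZMod N // m ∈ A}) (_ : c ≠ b), V (c : ZMod N)) ≤
          Submodule.span 𝔽
            ((fun q : Fin (K / N) × Fin Nr => Pi.single (e.symm q) (1 : 𝔽)) ''
              {q | q.2 ≠ τ b}) := by
        refine iSup_le fun c => iSup_le fun hcb => ?_
        rw [hVn c]
        apply Submodule.span_le.mpr
        rintro _ ⟨p, rfl⟩
        exact Submodule.subset_span ⟨(p, τ c), fun h => hcb (τ.injective h), rfl⟩
      exact Disjoint.mono h1 h2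
        (hsingle_li.disjoint_span_image (Set.disjoint_left.mpr fun q hq hq' => hq' hq))
    · rw [eq_top_iff, ← (Pi.basisFun 𝔽 (Fin Kc)).span_eq]
      apply Submodule.span_le.mpr
      rintro _ ⟨r, rfl⟩
      have hmem : (Pi.basisFun 𝔽 (Fin Kc)) r ∈
          V ((τ.symm (e r).2 : {m : ZMod N // m ∈ A}) : ZMod N) := by
        rw [hVn (τ.symm (e r).2)]
        apply Submodule.subset_span
        refine ⟨(e r).1, ?_⟩
        beta_reduce
        have h1 : ((e r).1, τ (τ.symm (e r).2)) = e r := by simp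
        rw [h1, Equiv.symm_apply_apply, Pi.basisFun_apply]
      exact SetLike.mem_coe.mpr (Submodule.mem_iSup_of_mem _ hmem)
end

section
/- (Appendix E allocation lemma.) Let N ≥ 2 and 1 ≤ b ≤ N − 1. Set α = b·⌈(N−b)/b⌉ − (N−b), let p_i = ⌊(N−b)/b⌋ for 1 ≤ i ≤ α and p_i = ⌈(N−b)/b⌉ for α < i ≤ b, and define r_1 = 1 and r_{i+1} = r_i + 1 + p_i for 1 ≤ i ≤ b − 1; put R = {r_1, …, r_b} ⊆ {1, …, N}. Then for every N_r with 1 ≤ N_r ≤ N and every n ∈ ZMod N, the cyclic window {n, n+1, …, n+(N−N_r)} ⊆ ZMod N contains at most ⌈(N − N_r + 1) / ⌊N/b⌋⌉ elements of the image of R in ZMod N. -/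
/-!
Put `d = ⌊N/b⌋ = ⌊(N-b)/b⌋ + 1`. Consecutive positions advance by `1 + p_i ≥ d`, and since
`∑ p_i = N - b` the positions end at `r_{b+1} = N + 1 = r_1 + N`, so the step from `r_b` round
to `r_1` is at least `d` as well. Hence no two chosen residues in `ZMod N` are at distance `t`
with `0 < t < d`. The chosen residues in a window `n, n+1, …, n+L-1` then have offsets that
are pairwise at least `d` apart, so `j ↦ ⌊j/d⌋` maps them injectively into `⌈L/d⌉` blocks.
-/

open Finset

lemma card_le_add_sub_one_div_of_forall_le_sub {d L : ℕ} (hd : 0 < d) {S : Finset ℕ}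
    (hS : S ⊆ range L) (hsep : ∀ j ∈ S, ∀ j' ∈ S, j < j' → d ≤ j' - j) :
    #S ≤ (L + d - 1) / d := by
  calc #S ≤ #(range ((L + d - 1) / d)) := by
        refine card_le_card_of_injOn (· / d) (fun j hj => ?_) (fun j hj j' hj' hdiv => ?_)
        · have hjL : j < L := mem_range.mp (hS hj)
          have := Nat.div_mul_le_self j d
          simp only [coe_range, Set.mem_Iio, Nat.lt_iff_add_one_le, Nat.le_div_iff_mul_le hd]
          rw [Nat.add_mul]
          omega
        · by_contra hne
          wlog hlt : j < j' generalizing j j'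
          · exact this j' hj' j hj hdiv.symm (Ne.symm hne) (by omega)
          have := hsep j hj j' hj' hlt
          have := Nat.lt_div_mul_add (a := j') hd
          have := Nat.div_mul_le_self j d
          simp only at hdiv
          rw [← hdiv] at *
          omega
    _ = (L + d - 1) / d := card_range _

def IsSeparatedBy {M : Type*} [AddMonoidWithOne M] (d : ℕ) (A : Set M) : Prop :=
  ∀ a ∈ A, ∀ t : ℕ, 0 < t → t < d → a + t ∉ A

theorem card_window_inter_le {M : Type*} [AddMonoidWithOne M] [DecidableEq M] {d : ℕ}
    (hd : 0 < d) {A : Finset M} (hA : IsSeparatedBy d (A : Set M)) (n : M) (L : ℕ) :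
    #((range L).image (fun j : ℕ => n + j) ∩ A) ≤ (L + d - 1) / d := by
  rw [← filter_mem_eq_inter, filter_image]
  refine card_image_le.trans (card_le_add_sub_one_div_of_forall_le_sub hd (filter_subset _ _) ?_)
  intro j hj j' hj' hlt
  by_contra! hclose
  refine hA _ (mem_filter.mp hj).2 (j' - j) (by omega) hclose ?_
  rw [add_assoc, ← Nat.cast_add, Nat.add_sub_cancel' hlt.le]
  exact (mem_filter.mp hj').2

section Gaps

variable {r : ℕ → ℕ} {b d : ℕ}

lemma add_le_of_forall_add_le_succ (hgap : ∀ i < b, r i + d ≤ r (i + 1)) {i j : ℕ} (hij : i < j)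
    (hjb : j ≤ b) : r i + d ≤ r j := by
  induction j, hij using Nat.le_induction with
  | base => exact hgap i (by omega)
  | succ j hij ih =>
    have := hgap j (by omega)
    have := ih (by omega)
    omega

theorem isSeparatedBy_image_of_gaps (N : ℕ) (hgap : ∀ i < b, r i + d ≤ r (i + 1))
    (hwrap : r b ≤ r 0 + N) :
    IsSeparatedBy d (((range b).image fun i => (r i : ZMod N)) : Set (ZMod N)) := by
  simp only [IsSeparatedBy, coe_image, coe_range, Set.mem_image, Set.mem_Iio]
  rintro _ ⟨i, hi, rfl⟩ t ht htd ⟨i', hi', heq⟩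
  have hlt : ∀ {k l}, k < l → l ≤ b → r k + d ≤ r l := add_le_of_forall_add_le_succ hgap
  have hmono : ∀ {k}, k < b → r 0 ≤ r k := fun {k} hk => by
    rcases k.eq_zero_or_pos with rfl | h
    exacts [le_rfl, by linarith [hlt h hk.le]]
  have hdvd : (N : ℤ) ∣ (r i' : ℤ) - (r i + t) := by
    rw [← ZMod.intCast_eq_intCast_iff_dvd_sub]
    push_cast
    exact heq.symm
  have := hmono hi
  have := hmono hi'
  have := hlt hi le_rfl
  have := hlt hi' le_rfl
  -- the chosen points lie in `[r 0, r b - d]` and distinct ones are at least `d` apart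
  suffices (r i' : ℤ) - (r i + t) ≠ 0 ∧ |(r i' : ℤ) - (r i + t)| < N from
    this.1 (Int.eq_zero_of_abs_lt_dvd hdvd this.2)
  rw [abs_lt]
  rcases lt_trichotomy i i' with h | rfl | h
  · have := hlt h hi'.le
    omega
  · omega
  · have := hlt h hi.le
    omega

end Gaps

section Allocation

variable (m b : ℕ)

/-- With `m = N - b` free slots, `allocGap m b i` is the paper's `p_i` and `allocPos m b i`
its `r_{i+1}`. -/
def allocGap (i : ℕ) : ℕ :=
  if i ≤ b * ((m + b - 1) / b) - m then m / b else (m + b - 1) / b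

def allocPos (i : ℕ) : ℕ := 1 + ∑ j ∈ range i, (1 + allocGap m b (j + 1))

variable {b}

lemma add_sub_one_div_eq (hb : 0 < b) :
    (m + b - 1) / b = if m % b = 0 then m / b else m / b + 1 := by
  have hm : m + b - 1 = b * (m / b) + (m % b + b - 1) := by have := Nat.div_add_mod m b; omega
  rw [hm, Nat.mul_add_div hb]
  split_ifs with h
  · rw [h, Nat.div_eq_of_lt (a := 0 + b - 1) (by omega), add_zero]
  · rw [show m % b + b - 1 = m % b - 1 + b by omega, Nat.add_div_right _ hb,
      Nat.div_eq_of_lt (a := m % b - 1) (by have := Nat.mod_lt m hb; omega)]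

lemma div_le_allocGap (hb : 0 < b) (i : ℕ) : m / b ≤ allocGap m b i := by
  unfold allocGap
  split_ifs
  · exact le_rfl
  · rw [add_sub_one_div_eq m hb]
    split_ifs <;> omega

lemma sum_allocGap (hb : 0 < b) : ∑ j ∈ range b, allocGap m b (j + 1) = m := by
  have hm := Nat.div_add_mod m b
  by_cases h : m % b = 0
  · simp only [allocGap, add_sub_one_div_eq m hb, h, if_true, ite_self, sum_const, card_range,
      smul_eq_mul]
    omega
  · have hρ := Nat.mod_lt m hb
    have hα : b * (m / b + 1) - m = b - m % b := by rw [Nat.mul_add_one]; omega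
    have hlow : (range b).filter (fun j => j + 1 ≤ b - m % b) = range (b - m % b) := by
      ext j; simp only [mem_filter, mem_range]; omega
    have hhigh : (range b).filter (fun j => ¬ j + 1 ≤ b - m % b) = Ico (b - m % b) b := by
      ext j; simp only [mem_filter, mem_range, mem_Ico]; omega
    simp only [allocGap, add_sub_one_div_eq m hb, h, if_false, hα]
    rw [sum_ite, sum_const, sum_const, hlow, hhigh, card_range, Nat.card_Ico, smul_eq_mul,
      smul_eq_mul, Nat.sub_sub_self hρ.le, Nat.mul_add_one, ← add_assoc, ← Nat.add_mul,
      Nat.sub_add_cancel hρ.le]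
    omega

lemma allocPos_succ (i : ℕ) :
    allocPos m b (i + 1) = allocPos m b i + 1 + allocGap m b (i + 1) := by
  simp only [allocPos, sum_range_succ]
  ring

lemma allocPos_self (hb : 0 < b) : allocPos m b b = m + b + 1 := by
  simp only [allocPos, sum_add_distrib, sum_const, card_range, smul_eq_mul, sum_allocGap m hb]
  omega

end Allocation

theorem stmt_11_general (N b : ℕ) (hb1 : 1 ≤ b) (hb2 : b ≤ N - 1) :
    let cdiv : ℕ → ℕ → ℕ := fun x y => (x + y - 1) / y
    let α : ℕ := b * cdiv (N - b) b - (N - b)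
    let p : ℕ → ℕ := fun i => if i ≤ α then (N - b) / b else cdiv (N - b) b
    let r : ℕ → ℕ := fun i => 1 + ∑ j ∈ Finset.range i, (1 + p (j + 1))
    ∀ Nr : ℕ, 1 ≤ Nr → Nr ≤ N → ∀ n : ZMod N,
      ((((Finset.range (N - Nr + 1)).image fun j : ℕ => n + (j : ZMod N)) ∩
        ((Finset.range b).image fun i : ℕ => ((r i : ℕ) : ZMod N)))).card ≤
      cdiv (N - Nr + 1) (N / b) := by
  intro cdiv α p r Nr _ _ n
  have hb : 0 < b := hb1
  have hd : N / b = (N - b) / b + 1 := by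
    rw [← Nat.add_div_right _ hb, Nat.sub_add_cancel (by omega)]
  have hsep : IsSeparatedBy (N / b)
      (((range b).image fun i => (allocPos (N - b) b i : ZMod N)) : Set (ZMod N)) := by
    refine isSeparatedBy_image_of_gaps N (fun i _ => ?_) ?_
    · rw [allocPos_succ, hd]
      have := div_le_allocGap (N - b) hb (i + 1)
      omega
    · rw [allocPos_self _ hb]
      simp only [allocPos, range_zero, sum_empty]
      omega
  exact card_window_inter_le (Nat.div_pos (by omega) hb) hsep n (N - Nr + 1)

/-- Appendix E allocation lemma: with `α = b⌈(N−b)/b⌉ − (N−b)`,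
`p_i = ⌊(N−b)/b⌋` for `i ≤ α` and `p_i = ⌈(N−b)/b⌉` otherwise, `r_1 = 1`,
`r_{i+1} = r_i + 1 + p_i`, and `R = {r_1, …, r_b}`, every cyclic window
`{n, n+1, …, n+(N−N_r)}` in `ZMod N` contains at most `⌈(N − N_r + 1)/⌊N/b⌋⌉` elements
of the image of `R` in `ZMod N`.  (Here `r` is given by its closed form
`r_{i+1} = 1 + ∑_{j ≤ i} (1 + p_j)`.) -/
theorem stmt_11 (N b : ℕ) (hN : 2 ≤ N) (hb1 : 1 ≤ b) (hb2 : b ≤ N - 1) :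
    let cdiv : ℕ → ℕ → ℕ := fun x y => (x + y - 1) / y
    let α : ℕ := b * cdiv (N - b) b - (N - b)
    let p : ℕ → ℕ := fun i => if i ≤ α then (N - b) / b else cdiv (N - b) b
    let r : ℕ → ℕ := fun i => 1 + ∑ j ∈ Finset.range i, (1 + p (j + 1))
    ∀ Nr : ℕ, 1 ≤ Nr → Nr ≤ N → ∀ n : ZMod N,
      ((((Finset.range (N - Nr + 1)).image fun j : ℕ => n + (j : ZMod N)) ∩
        ((Finset.range b).image fun i : ℕ => ((r i : ℕ) : ZMod N)))).card ≤
      cdiv (N - Nr + 1) (N / b) :=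
  stmt_11_general N b hb1 hb2
end

section
/- (Assignment feasibility for Theorem 5.) Let K = a·N + b with a ≥ 0 an integer, 1 ≤ b ≤ N − 1, and N_r ≤ N. Consider the extended cyclic assignment: datasets 1, …, aN are assigned cyclically, dataset k going to the N − N_r + 1 workers k, k−1, …, k−(N−N_r) in ZMod N; the remaining b datasets are identified with the b positions R = {r_1, …, r_b} ⊆ {1, …, N} of the allocation algorithm (α = b⌈(N−b)/b⌉ − (N−b), p_1 = ⋯ = p_α = ⌊(N−b)/b⌋, p_{α+1} = ⋯ = p_b = ⌈(N−b)/b⌉, r_1 = 1, r_{i+1} = r_i + 1 + p_i), and the dataset at position r is assigned to the workers r, r−1, …, r−(N−N_r) in ZMod N. Then every dataset is assigned to exactly N − N_r + 1 workers, and every worker is assigned at most M₁ = a·(N − N_r + 1) + ⌈(N − N_r + 1)/⌊N/b⌋⌉ datasets. -/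
/-!
A dataset at position `c` occupies a window of `N − N_r + 1` consecutive residues, hence
exactly that many workers. Fix a worker `n`. The `aN` cyclic datasets sweep every residue
exactly `a` times, contributing `a(N − N_r + 1)`. The allocation gaps `1 + p_i` are all at
least `⌊N/b⌋` and add up to `N`, so the `b` extra positions are pairwise at cyclic distance
at least `⌊N/b⌋`, and at most `⌈(N − N_r + 1)/⌊N/b⌋⌉` of them fit in one window.
-/

open Finset

/-- The workers `c, c − 1, …, c − (L − 1)` of a dataset at position `c`. -/
def window {N : ℕ} (c : ZMod N) (L : ℕ) : Finset (ZMod N) :=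
  (range L).image fun j : ℕ => c - j

section Window

variable {N L : ℕ}

lemma mem_window_iff [NeZero N] (hL : L ≤ N) {c n : ZMod N} :
    n ∈ window c L ↔ (c - n).val < L := by
  constructor
  · intro h
    obtain ⟨j, hj, rfl⟩ := mem_image.mp h
    rw [sub_sub_cancel, ZMod.val_cast_of_lt ((mem_range.mp hj).trans_le hL)]
    exact mem_range.mp hj
  · intro h
    refine mem_image.mpr ⟨(c - n).val, mem_range.mpr h, ?_⟩
    rw [ZMod.natCast_zmod_val, sub_sub_cancel]

lemma card_window (hL : L ≤ N) (c : ZMod N) : #(window c L) = L := by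
  rw [window, card_image_of_injOn, card_range]
  intro i hi j hj hij
  have hi : i < N := (mem_range.mp hi).trans_le hL
  have hj : j < N := (mem_range.mp hj).trans_le hL
  have := congrArg ZMod.val (sub_right_injective hij)
  rwa [ZMod.val_cast_of_lt hi, ZMod.val_cast_of_lt hj] at this

lemma card_filter_range_natCast [NeZero N] (P : ZMod N → Prop) [DecidablePred P] :
    #((range N).filter fun t : ℕ => P t) = #{x | P x} := by
  refine card_nbij' Nat.cast ZMod.val ?_ ?_ ?_ ?_
  · intro t ht
    simp_all
  · intro x hx
    simp_all [ZMod.val_lt]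
  · intro t ht
    exact ZMod.val_cast_of_lt (mem_range.mp (mem_filter.mp ht).1)
  · intro x _
    simp

lemma card_filter_range_mul_natCast [NeZero N] (P : ZMod N → Prop) [DecidablePred P] (a : ℕ) :
    #((range (a * N)).filter fun t : ℕ => P t) = a * #{x | P x} := by
  induction a with
  | zero => simp
  | succ a ih =>
    rw [Nat.succ_mul, card_filter, sum_range_add, ← card_filter, ← card_filter, ih,
      ← card_filter_range_natCast]
    simp only [Nat.cast_add, Nat.cast_mul, ZMod.natCast_self, mul_zero, zero_add]
    ring

lemma card_filter_val_lt [NeZero N] (hL : L ≤ N) : #{x : ZMod N | x.val < L} = L := by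
  rw [← card_filter_range_natCast]
  conv_rhs => rw [← card_range L]
  congr 1
  ext t
  simp only [mem_filter, mem_range, ZMod.val_natCast]
  constructor
  · rintro ⟨htN, htL⟩
    rwa [Nat.mod_eq_of_lt htN] at htL
  · intro htL
    exact ⟨htL.trans_le hL, (Nat.mod_le t N).trans_lt htL⟩

lemma card_filter_mem_window_add_one [NeZero N] (hL : L ≤ N) (n : ZMod N) :
    #{x : ZMod N | n ∈ window (x + 1) L} = L := by
  simp only [mem_window_iff hL]
  conv_rhs => rw [← card_filter_val_lt hL]
  exact card_equiv (Equiv.addRight (1 - n)) (by simp [add_sub_assoc])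

lemma card_filter_fin_mem_window [NeZero N] (hL : L ≤ N) (a : ℕ) (n : ZMod N) :
    #{k : Fin (a * N) | n ∈ window (((k : ℕ) + 1 : ℕ) : ZMod N) L} = a * L := by
  rw [card_filter, Fin.sum_univ_eq_sum_range
    (fun t => if n ∈ window ((t + 1 : ℕ) : ZMod N) L then 1 else 0), ← card_filter]
  simp only [Nat.cast_add, Nat.cast_one]
  rw [card_filter_range_mul_natCast (fun x => n ∈ window (x + 1) L),
    card_filter_mem_window_add_one hL]

end Window

lemma card_le_ceilDiv_of_separated {ι : Type*} (s : Finset ι) (f : ι → ℕ) {g L : ℕ}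
    (hg : 0 < g) (hlt : ∀ x ∈ s, f x < L)
    (hsep : ∀ x ∈ s, ∀ y ∈ s, x ≠ y → f x ≤ f y → f x + g ≤ f y) :
    #s ≤ (L + g - 1) / g := by
  have hdiv : ∀ {u v : ℕ}, u + g ≤ v → u / g < v / g := fun {u v} h => by
    have := Nat.div_le_div_right (c := g) h
    rw [Nat.add_div_right u hg] at this
    omega
  calc #s = #(s.image fun x => f x / g) := by
        refine (card_image_of_injOn fun x hx y hy hxy => ?_).symm
        by_contra hne
        rcases le_total (f x) (f y) with h | h
        · exact (hdiv (hsep x hx y hy hne h)).ne hxy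
        · exact (hdiv (hsep y hy x hx (Ne.symm hne) h)).ne hxy.symm
    _ ≤ #(range ((L + g - 1) / g)) := by
        refine card_le_card fun v hv => ?_
        obtain ⟨x, hx, rfl⟩ := mem_image.mp hv
        exact mem_range.mpr (hdiv (by have := hlt x hx; omega))
    _ = (L + g - 1) / g := card_range _

lemma val_sub_add_le_val_sub {N g : ℕ} [NeZero N] {u v n : ZMod N} (hg : g ≤ (v - u).val)
    (h : (u - n).val ≤ (v - n).val) : (u - n).val + g ≤ (v - n).val := by
  have := ZMod.val_sub h
  rw [sub_sub_sub_cancel_right] at this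
  omega

lemma card_filter_mem_window_le {N g L : ℕ} [NeZero N] {ι : Type*} (s : Finset ι)
    (c : ι → ZMod N) (hg : 0 < g) (hL : L ≤ N)
    (hsep : ∀ i ∈ s, ∀ j ∈ s, i ≠ j → g ≤ (c j - c i).val) (n : ZMod N) : #{i ∈ s | n ∈ window (c i) L} ≤ (L + g - 1) / g := by
  refine card_le_ceilDiv_of_separated _ (fun i => (c i - n).val) hg (fun i hi => ?_)
    (fun i hi j hj hij h => ?_)
  · exact (mem_window_iff hL).mp (mem_filter.mp hi).2
  · exact val_sub_add_le_val_sub (hsep i (mem_filter.mp hi).1 j (mem_filter.mp hj).1 hij) h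

lemma le_val_natCast_sub {N g x y : ℕ} (hxy : x + g ≤ y) (hyx : y + g ≤ x + N) :
    g ≤ ((y : ZMod N) - x).val := by
  rcases Nat.eq_zero_or_pos g with rfl | hg
  · exact Nat.zero_le _
  rw [← Nat.cast_sub (by omega), ZMod.val_cast_of_lt (by omega)]
  omega

lemma le_val_natCast_sub_of_gaps {N g b : ℕ} {r : ℕ → ℕ}
    (hr : ∀ i j, i < j → j ≤ b → r i + g ≤ r j) (hrb : r b ≤ r 0 + N) {i j : ℕ}
    (hi : i < b) (hj : j < b) (hij : i ≠ j) : g ≤ ((r j : ZMod N) - r i).val := by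
  have hr0 : ∀ k ≤ b, r 0 ≤ r k := fun k hk => by
    rcases Nat.eq_zero_or_pos k with rfl | hk0
    · exact le_rfl
    · have := hr 0 k hk0 hk; omega
  rcases Nat.lt_or_gt_of_ne hij with h | h
  · exact le_val_natCast_sub (hr i j h hj.le)
      (by have := hr j b hj le_rfl; have := hr0 i hi.le; omega)
  · simpa using le_val_natCast_sub (N := N) (x := r i) (y := r j + N)
      (by have := hr i b hi le_rfl; have := hr0 j hj.le; omega)
      (by have := hr j i h hi.le; omega)

lemma add_le_sum_range_of_lt {f : ℕ → ℕ} {g i j : ℕ} (hf : ∀ t, g ≤ f t) (hij : i < j) :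
    ∑ t ∈ range i, f t + g ≤ ∑ t ∈ range j, f t := by
  rw [← sum_range_add_sum_Ico f hij.le]
  gcongr
  calc g ≤ f i := hf i
    _ ≤ ∑ t ∈ Ico i j, f t :=
      single_le_sum (fun _ _ => Nat.zero_le _) (mem_Ico.mpr ⟨le_rfl, hij⟩)

lemma sum_range_ite_succ_le {M : Type*} [AddCommMonoid M] {α b : ℕ} (x y : M) (h : α ≤ b) :
    ∑ j ∈ range b, (if j + 1 ≤ α then x else y) = α • x + (b - α) • y := by
  rw [← sum_range_add_sum_Ico _ h,
    sum_congr rfl fun j hj => if_pos (show j + 1 ≤ α from mem_range.mp hj),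
    sum_congr rfl fun j hj => if_neg (show ¬j + 1 ≤ α by have := (mem_Ico.mp hj).1; omega)]
  simp

lemma ceilDiv_balance {M b c α : ℕ} (hb : 0 < b) (hc : c = (M + b - 1) / b)
    (hα : α = b * c - M) : α ≤ b ∧ α * (M / b) + (b - α) * c = M := by
  obtain ⟨q, r, hr, rfl⟩ : ∃ q r, r < b ∧ M = b * q + r :=
    ⟨M / b, M % b, Nat.mod_lt M hb, (Nat.div_add_mod M b).symm⟩
  have hq : (b * q + r) / b = q := by
    rw [Nat.mul_add_div hb, Nat.div_eq_of_lt hr, add_zero]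
  rw [hq]
  rcases Nat.eq_zero_or_pos r with rfl | hr0
  · have hcq : c = q := by
      rw [hc, add_zero, Nat.add_sub_assoc hb, Nat.mul_add_div hb, Nat.div_eq_of_lt (by omega),
        add_zero]
    subst hcq hα
    simp
  · have hcq : c = q + 1 := by
      rw [hc, show b * q + r + b - 1 = b * (q + 1) + (r - 1) by rw [mul_add_one]; omega,
        Nat.mul_add_div hb, Nat.div_eq_of_lt (by omega), add_zero]
    have hαr : α = b - r := by rw [hα, hcq, mul_add_one]; omega
    subst hcq hαr
    refine ⟨Nat.sub_le b r, ?_⟩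
    rw [Nat.sub_sub_self hr.le, mul_add_one, ← add_assoc, ← add_mul, Nat.sub_add_cancel hr.le]

section Allocation

variable {N b α : ℕ} {p : ℕ → ℕ}

lemma allocation_sum_gaps (hb : 0 < b) (hbN : b ≤ N)
    (hα : α = b * ((N - b + b - 1) / b) - (N - b))
    (hp : ∀ i, p i = if i ≤ α then (N - b) / b else (N - b + b - 1) / b) :
    ∑ t ∈ range b, (1 + p (t + 1)) = N := by
  obtain ⟨hαb, hbal⟩ := ceilDiv_balance hb rfl hα
  simp only [hp, sum_add_distrib, sum_const, card_range, smul_eq_mul, mul_one]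
  rw [sum_range_ite_succ_le _ _ hαb, smul_eq_mul, smul_eq_mul, hbal]
  omega

lemma div_le_allocation_gap (hb : 0 < b) (hbN : b ≤ N)
    (hp : ∀ i, p i = if i ≤ α then (N - b) / b else (N - b + b - 1) / b) (t : ℕ) :
    N / b ≤ 1 + p t := by
  have hfloor : (N - b) / b + 1 = N / b := by
    rw [← Nat.add_div_right _ hb, Nat.sub_add_cancel hbN]
  have hceil : (N - b) / b ≤ (N - b + b - 1) / b := Nat.div_le_div_right (by omega)
  rw [hp]
  split <;> omega

end Allocation

theorem stmt_12_general (N b a Nr : ℕ) (hb1 : 1 ≤ b) (hb2 : b ≤ N - 1)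
    (hNr : 1 ≤ Nr) :
    let cdiv : ℕ → ℕ → ℕ := fun x y => (x + y - 1) / y
    let α : ℕ := b * cdiv (N - b) b - (N - b)
    let p : ℕ → ℕ := fun i => if i ≤ α then (N - b) / b else cdiv (N - b) b
    let r : ℕ → ℕ := fun i => 1 + ∑ j ∈ Finset.range i, (1 + p (j + 1))
    let workers : (Fin (a * N) ⊕ Fin b) → Finset (ZMod N) :=
      Sum.elim
        (fun k => (Finset.range (N - Nr + 1)).image
          fun j : ℕ => (((k : ℕ) + 1 : ℕ) : ZMod N) - (j : ZMod N))
        (fun i => (Finset.range (N - Nr + 1)).image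
          fun j : ℕ => ((r (i : ℕ) : ℕ) : ZMod N) - (j : ZMod N))
    (∀ d : Fin (a * N) ⊕ Fin b, (workers d).card = N - Nr + 1) ∧
    (∀ n : ZMod N,
      (Finset.univ.filter fun d : Fin (a * N) ⊕ Fin b => n ∈ workers d).card ≤
        a * (N - Nr + 1) + cdiv (N - Nr + 1) (N / b)) := by
  intro cdiv α p r workers
  have : NeZero N := ⟨by omega⟩
  have hL : N - Nr + 1 ≤ N := by omega
  have hbN : b ≤ N := by omega
  have hp : ∀ i, p i = if i ≤ α then (N - b) / b else (N - b + b - 1) / b := fun _ => rfl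
  have hr : ∀ i j, i < j → j ≤ b → r i + N / b ≤ r j := fun i j hij _ => by
    have := add_le_sum_range_of_lt (fun t => div_le_allocation_gap hb1 hbN hp (t + 1)) hij
    simp only [r]
    omega
  have hrb : r b ≤ r 0 + N := by
    have := allocation_sum_gaps hb1 hbN rfl hp
    simp only [r, sum_range_zero]
    omega
  refine ⟨fun d => ?_, fun n => ?_⟩
  · rcases d with k | i <;> exact card_window hL _
  rw [card_filter, Fintype.sum_sum_type, ← card_filter, ← card_filter]
  gcongr
  · exact (card_filter_fin_mem_window hL a n).le
  · exact card_filter_mem_window_le univ (fun i : Fin b => (r i : ZMod N)) (Nat.div_pos hbN hb1)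
      hL (fun i _ j _ hij => le_val_natCast_sub_of_gaps hr hrb i.isLt j.isLt (Fin.val_ne_of_ne hij))
      n

/-- assignment feasibility for Theorem 5: for `K = a·N + b` datasets under
the extended cyclic assignment (the first `a·N` datasets assigned cyclically, dataset `k`
to workers `k, k−1, …, k−(N−N_r)`; the remaining `b` datasets placed at the positions
`r_1, …, r_b` of the Appendix E allocation algorithm, the dataset at position `r` going to
workers `r, r−1, …, r−(N−N_r)`), every dataset is assigned to exactly `N − N_r + 1`
workers and every worker gets at most
`M₁ = a(N − N_r + 1) + ⌈(N − N_r + 1)/⌊N/b⌋⌉` datasets. -/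
theorem stmt_12 (N b a Nr : ℕ) (hN : 2 ≤ N) (hb1 : 1 ≤ b) (hb2 : b ≤ N - 1)
    (hNr : 1 ≤ Nr) (hNrN : Nr ≤ N) :
    let cdiv : ℕ → ℕ → ℕ := fun x y => (x + y - 1) / y
    let α : ℕ := b * cdiv (N - b) b - (N - b)
    let p : ℕ → ℕ := fun i => if i ≤ α then (N - b) / b else cdiv (N - b) b
    let r : ℕ → ℕ := fun i => 1 + ∑ j ∈ Finset.range i, (1 + p (j + 1))
    let workers : (Fin (a * N) ⊕ Fin b) → Finset (ZMod N) :=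
      Sum.elim
        (fun k => (Finset.range (N - Nr + 1)).image
          fun j : ℕ => (((k : ℕ) + 1 : ℕ) : ZMod N) - (j : ZMod N))
        (fun i => (Finset.range (N - Nr + 1)).image
          fun j : ℕ => ((r (i : ℕ) : ℕ) : ZMod N) - (j : ZMod N))
    (∀ d : Fin (a * N) ⊕ Fin b, (workers d).card = N - Nr + 1) ∧
    (∀ n : ZMod N,
      (Finset.univ.filter fun d : Fin (a * N) ⊕ Fin b => n ∈ workers d).card ≤
        a * (N - Nr + 1) + cdiv (N - Nr + 1) (N / b)) :=
  stmt_12_general N b a Nr hb1 hb2 hNr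
end

section
/- (Remark 3, converse step 1.) Let q be a prime power, L ≥ 1, and let W_1, W_2, W_3 ∈ 𝔽_q^L. Suppose ψ_1, ψ_2, ψ_3 are encoders with X_1 = ψ_1(W_1, W_2) ∈ 𝔽_q^{T_1}, X_2 = ψ_2(W_2, W_3) ∈ 𝔽_q^{T_2}, X_3 = ψ_3(W_1, W_3) ∈ 𝔽_q^{T_3}, and that for every 2-element subset A ⊆ {1, 2, 3} there is a decoder φ_A satisfying φ_A((X_n)_{n ∈ A}) = (W_1 + W_2 + W_3, 2·W_1 + W_2 + W_3) for all (W_1, W_2, W_3) ∈ (𝔽_q^L)³. Then for every 2-element subset {i, j} ⊆ {1, 2, 3} there exists a function ρ_{ij} such that ρ_{ij}(X_i, X_j) = (W_1, W_2, W_3) for all (W_1, W_2, W_3) ∈ (𝔽_q^L)³. -/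
/-- Remark 3, converse step 1: in the `(K,N,N_r,K_c,M) = (3,3,2,2,2)`
problem with assignment `Z₁ = {1,2}`, `Z₂ = {2,3}`, `Z₃ = {1,3}` and demand
`(W₁+W₂+W₃, 2W₁+W₂+W₃)`, if every pair of answers decodes the demand, then every pair of
answers in fact determines all three messages `(W₁, W₂, W₃)`. -/
theorem stmt_13 {𝔽 : Type} [Field 𝔽] [Fintype 𝔽] (L T1 T2 T3 : ℕ) (hL : 0 < L)
    (ψ1 : (Fin L → 𝔽) → (Fin L → 𝔽) → (Fin T1 → 𝔽))
    (ψ2 : (Fin L → 𝔽) → (Fin L → 𝔽) → (Fin T2 → 𝔽))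
    (ψ3 : (Fin L → 𝔽) → (Fin L → 𝔽) → (Fin T3 → 𝔽))
    (hdec12 : ∃ φ : (Fin T1 → 𝔽) → (Fin T2 → 𝔽) → ((Fin L → 𝔽) × (Fin L → 𝔽)),
      ∀ W1 W2 W3 : Fin L → 𝔽,
        φ (ψ1 W1 W2) (ψ2 W2 W3) = (W1 + W2 + W3, (2 : 𝔽) • W1 + W2 + W3))
    (hdec13 : ∃ φ : (Fin T1 → 𝔽) → (Fin T3 → 𝔽) → ((Fin L → 𝔽) × (Fin L → 𝔽)),
      ∀ W1 W2 W3 : Fin L → 𝔽,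
        φ (ψ1 W1 W2) (ψ3 W1 W3) = (W1 + W2 + W3, (2 : 𝔽) • W1 + W2 + W3))
    (hdec23 : ∃ φ : (Fin T2 → 𝔽) → (Fin T3 → 𝔽) → ((Fin L → 𝔽) × (Fin L → 𝔽)),
      ∀ W1 W2 W3 : Fin L → 𝔽,
        φ (ψ2 W2 W3) (ψ3 W1 W3) = (W1 + W2 + W3, (2 : 𝔽) • W1 + W2 + W3)) :
    (∃ ρ : (Fin T1 → 𝔽) → (Fin T2 → 𝔽) → ((Fin L → 𝔽) × (Fin L → 𝔽) × (Fin L → 𝔽)),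
      ∀ W1 W2 W3 : Fin L → 𝔽, ρ (ψ1 W1 W2) (ψ2 W2 W3) = (W1, W2, W3)) ∧
    (∃ ρ : (Fin T1 → 𝔽) → (Fin T3 → 𝔽) → ((Fin L → 𝔽) × (Fin L → 𝔽) × (Fin L → 𝔽)),
      ∀ W1 W2 W3 : Fin L → 𝔽, ρ (ψ1 W1 W2) (ψ3 W1 W3) = (W1, W2, W3)) ∧
    (∃ ρ : (Fin T2 → 𝔽) → (Fin T3 → 𝔽) → ((Fin L → 𝔽) × (Fin L → 𝔽) × (Fin L → 𝔽)),
      ∀ W1 W2 W3 : Fin L → 𝔽, ρ (ψ2 W2 W3) (ψ3 W1 W3) = (W1, W2, W3)) := by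
  obtain ⟨φ12, h12⟩ := hdec12
  obtain ⟨φ13, h13⟩ := hdec13
  obtain ⟨φ23, h23⟩ := hdec23
  have key : ∀ A B C : Fin L → 𝔽, ((2 : 𝔽) • A + B + C) - (A + B + C) = A := by
    intro A B C; funext i; simp [Pi.smul_apply]; ring
  refine ⟨⟨fun x1 x2 =>
      ((φ12 x1 x2).2 - (φ12 x1 x2).1,
       (φ13 x1 (ψ3 ((φ12 x1 x2).2 - (φ12 x1 x2).1) 0)).1 - ((φ12 x1 x2).2 - (φ12 x1 x2).1),
       (φ12 x1 x2).1 - (φ13 x1 (ψ3 ((φ12 x1 x2).2 - (φ12 x1 x2).1) 0)).1), ?_⟩,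
    ⟨fun x1 x3 =>
      ((φ13 x1 x3).2 - (φ13 x1 x3).1,
       (φ13 x1 x3).1 - (φ13 (ψ1 ((φ13 x1 x3).2 - (φ13 x1 x3).1) 0) x3).1,
       (φ13 (ψ1 ((φ13 x1 x3).2 - (φ13 x1 x3).1) 0) x3).1 - ((φ13 x1 x3).2 - (φ13 x1 x3).1)), ?_⟩,
    ⟨fun x2 x3 =>
      ((φ23 x2 x3).2 - (φ23 x2 x3).1,
       (φ23 x2 x3).1 - (φ13 (ψ1 ((φ23 x2 x3).2 - (φ23 x2 x3).1) 0) x3).1,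
       (φ13 (ψ1 ((φ23 x2 x3).2 - (φ23 x2 x3).1) 0) x3).1 - ((φ23 x2 x3).2 - (φ23 x2 x3).1)), ?_⟩⟩
  · intro W1 W2 W3
    simp only [h12 W1 W2 W3, key W1 W2 W3, h13 W1 W2 0]
    refine Prod.ext rfl (Prod.ext ?_ ?_) <;> funext i <;> simp <;> ring
  · intro W1 W2 W3
    simp only [h13 W1 W2 W3, key W1 W2 W3, h13 W1 0 W3]
    refine Prod.ext rfl (Prod.ext ?_ ?_) <;> funext i <;> simp <;> ring
  · intro W1 W2 W3
    simp only [h23 W1 W2 W3, key W1 W2 W3, h13 W1 0 W3]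
    refine Prod.ext rfl (Prod.ext ?_ ?_) <;> funext i <;> simp <;> ring
end

section
/- (Remark 3, converse step 2.) Let q be a prime power, L ≥ 1, and let ψ_1, ψ_2, ψ_3 be encoders with X_1 = ψ_1(W_1, W_2) ∈ 𝔽_q^{T_1}, X_2 = ψ_2(W_2, W_3) ∈ 𝔽_q^{T_2}, X_3 = ψ_3(W_1, W_3) ∈ 𝔽_q^{T_3}. If for every 2-element subset A ⊆ {1, 2, 3} there is a decoder φ_A satisfying φ_A((X_n)_{n ∈ A}) = (W_1 + W_2 + W_3, 2·W_1 + W_2 + W_3) for all (W_1, W_2, W_3) ∈ (𝔽_q^L)³, then T_i + T_j ≥ 3·L for every 2-element subset {i, j} ⊆ {1, 2, 3}; hence any correct scheme for this demand has communication cost at least 3. -/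
/-!
The two demanded combinations determine `W₁` (their difference) and `W₂ + W₃`. Once `W₁` is
known, the answer of worker 3 on `(W₁, 0)` can be simulated, and decoder `{1,3}` applied to it
and worker 1's answer returns `W₁ + W₂`; symmetrically, simulating worker 1 on `(W₁, 0)` yields
`W₁ + W₃`. Hence any two answers determine all three messages, so `q ^ (3L) ≤ q ^ (Tᵢ + Tⱼ)`.
-/

open Function

lemma three_mul_le_add_of_injective {𝔽 : Type*} [Fintype 𝔽] [Nontrivial 𝔽] {L a b : ℕ}
    {f : (Fin L → 𝔽) × (Fin L → 𝔽) × (Fin L → 𝔽) → (Fin a → 𝔽) × (Fin b → 𝔽)}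
    (hf : Injective f) : 3 * L ≤ a + b := by
  have hcard := Fintype.card_le_of_injective f hf
  simp only [Fintype.card_prod, Fintype.card_fun, Fintype.card_fin, ← pow_add] at hcard
  exact (Nat.pow_le_pow_iff_right Fintype.one_lt_card).mp (by convert hcard using 2; ring)

section Recovery

variable {R V Y₁ Y₂ Y₃ : Type*} [Semiring R] [AddCommGroup V] [Module R V]
  {ψ1 : V → V → Y₁} {ψ2 : V → V → Y₂} {ψ3 : V → V → Y₃} {φ13 : Y₁ → Y₃ → V × V}

lemma injective_answers₁₂ {φ12 : Y₁ → Y₂ → V × V}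
    (h12 : ∀ W1 W2 W3, φ12 (ψ1 W1 W2) (ψ2 W2 W3) = (W1 + W2 + W3, (2 : R) • W1 + W2 + W3))
    (h13 : ∀ W1 W2 W3, φ13 (ψ1 W1 W2) (ψ3 W1 W3) = (W1 + W2 + W3, (2 : R) • W1 + W2 + W3)) :
    Injective fun W : V × V × V => (ψ1 W.1 W.2.1, ψ2 W.2.1 W.2.2) := by
  refine LeftInverse.injective (g := fun X =>
    let d := φ12 X.1 X.2
    let w1 := d.2 - d.1
    let w2 := (φ13 X.1 (ψ3 w1 0)).1 - w1
    (w1, w2, d.1 - w1 - w2)) ?_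
  rintro ⟨W1, W2, W3⟩
  simp [h12, h13, two_smul, sub_sub]

lemma injective_answers₁₃
    (h13 : ∀ W1 W2 W3, φ13 (ψ1 W1 W2) (ψ3 W1 W3) = (W1 + W2 + W3, (2 : R) • W1 + W2 + W3)) :
    Injective fun W : V × V × V => (ψ1 W.1 W.2.1, ψ3 W.1 W.2.2) := by
  refine LeftInverse.injective (g := fun X =>
    let d := φ13 X.1 X.2
    let w1 := d.2 - d.1
    let w3 := (φ13 (ψ1 w1 0) X.2).1 - w1
    (w1, d.1 - w1 - w3, w3)) ?_
  rintro ⟨W1, W2, W3⟩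
  simp [h13, two_smul, sub_sub]

lemma injective_answers₂₃ {φ23 : Y₂ → Y₃ → V × V}
    (h23 : ∀ W1 W2 W3, φ23 (ψ2 W2 W3) (ψ3 W1 W3) = (W1 + W2 + W3, (2 : R) • W1 + W2 + W3))
    (h13 : ∀ W1 W2 W3, φ13 (ψ1 W1 W2) (ψ3 W1 W3) = (W1 + W2 + W3, (2 : R) • W1 + W2 + W3)) :
    Injective fun W : V × V × V => (ψ2 W.2.1 W.2.2, ψ3 W.1 W.2.2) := by
  refine LeftInverse.injective (g := fun X =>
    let d := φ23 X.1 X.2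
    let w1 := d.2 - d.1
    let w3 := (φ13 (ψ1 w1 0) X.2).1 - w1
    (w1, d.1 - w1 - w3, w3)) ?_
  rintro ⟨W1, W2, W3⟩
  simp [h23, h13, two_smul, sub_sub]

end Recovery

theorem stmt_14_general {𝔽 : Type} [Field 𝔽] [Fintype 𝔽] (L T1 T2 T3 : ℕ)
    (ψ1 : (Fin L → 𝔽) → (Fin L → 𝔽) → (Fin T1 → 𝔽))
    (ψ2 : (Fin L → 𝔽) → (Fin L → 𝔽) → (Fin T2 → 𝔽))
    (ψ3 : (Fin L → 𝔽) → (Fin L → 𝔽) → (Fin T3 → 𝔽))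
    (hdec12 : ∃ φ : (Fin T1 → 𝔽) → (Fin T2 → 𝔽) → ((Fin L → 𝔽) × (Fin L → 𝔽)),
      ∀ W1 W2 W3 : Fin L → 𝔽,
        φ (ψ1 W1 W2) (ψ2 W2 W3) = (W1 + W2 + W3, (2 : 𝔽) • W1 + W2 + W3))
    (hdec13 : ∃ φ : (Fin T1 → 𝔽) → (Fin T3 → 𝔽) → ((Fin L → 𝔽) × (Fin L → 𝔽)),
      ∀ W1 W2 W3 : Fin L → 𝔽,
        φ (ψ1 W1 W2) (ψ3 W1 W3) = (W1 + W2 + W3, (2 : 𝔽) • W1 + W2 + W3))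
    (hdec23 : ∃ φ : (Fin T2 → 𝔽) → (Fin T3 → 𝔽) → ((Fin L → 𝔽) × (Fin L → 𝔽)),
      ∀ W1 W2 W3 : Fin L → 𝔽,
        φ (ψ2 W2 W3) (ψ3 W1 W3) = (W1 + W2 + W3, (2 : 𝔽) • W1 + W2 + W3)) :
    3 * L ≤ T1 + T2 ∧ 3 * L ≤ T1 + T3 ∧ 3 * L ≤ T2 + T3 := by
  obtain ⟨φ12, h12⟩ := hdec12
  obtain ⟨φ13, h13⟩ := hdec13
  obtain ⟨φ23, h23⟩ := hdec23
  exact ⟨three_mul_le_add_of_injective (injective_answers₁₂ h12 h13),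
    three_mul_le_add_of_injective (injective_answers₁₃ h13),
    three_mul_le_add_of_injective (injective_answers₂₃ h23 h13)⟩

/-- Remark 3, converse step 2: in the `(K,N,N_r,K_c,M) = (3,3,2,2,2)`
problem with assignment `Z₁ = {1,2}`, `Z₂ = {2,3}`, `Z₃ = {1,3}` and demand
`(W₁+W₂+W₃, 2W₁+W₂+W₃)`, if every pair of answers decodes the demand then
`T_i + T_j ≥ 3·L` for every pair `{i, j}`; hence the communication cost is at least 3. -/
theorem stmt_14 {𝔽 : Type} [Field 𝔽] [Fintype 𝔽] (L T1 T2 T3 : ℕ) (hL : 0 < L)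
    (ψ1 : (Fin L → 𝔽) → (Fin L → 𝔽) → (Fin T1 → 𝔽))
    (ψ2 : (Fin L → 𝔽) → (Fin L → 𝔽) → (Fin T2 → 𝔽))
    (ψ3 : (Fin L → 𝔽) → (Fin L → 𝔽) → (Fin T3 → 𝔽))
    (hdec12 : ∃ φ : (Fin T1 → 𝔽) → (Fin T2 → 𝔽) → ((Fin L → 𝔽) × (Fin L → 𝔽)),
      ∀ W1 W2 W3 : Fin L → 𝔽,
        φ (ψ1 W1 W2) (ψ2 W2 W3) = (W1 + W2 + W3, (2 : 𝔽) • W1 + W2 + W3))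
    (hdec13 : ∃ φ : (Fin T1 → 𝔽) → (Fin T3 → 𝔽) → ((Fin L → 𝔽) × (Fin L → 𝔽)),
      ∀ W1 W2 W3 : Fin L → 𝔽,
        φ (ψ1 W1 W2) (ψ3 W1 W3) = (W1 + W2 + W3, (2 : 𝔽) • W1 + W2 + W3))
    (hdec23 : ∃ φ : (Fin T2 → 𝔽) → (Fin T3 → 𝔽) → ((Fin L → 𝔽) × (Fin L → 𝔽)),
      ∀ W1 W2 W3 : Fin L → 𝔽,
        φ (ψ2 W2 W3) (ψ3 W1 W3) = (W1 + W2 + W3, (2 : 𝔽) • W1 + W2 + W3)) :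
    3 * L ≤ T1 + T2 ∧ 3 * L ≤ T1 + T3 ∧ 3 * L ≤ T2 + T3 :=
  stmt_14_general L T1 T2 T3 ψ1 ψ2 ψ3 hdec12 hdec13 hdec23
end

section
/- (Example 3 / achievability for (K, N, N_r, K_c, M) = (3, 3, 2, 3, 2).) There is a prime power q₀ such that for every prime power q ≥ q₀ and every even L there exist encoders ψ_1, ψ_2, ψ_3, each with output in 𝔽_q^{3L/2}, where ψ_1 depends only on (W_1, W_2), ψ_2 only on (W_2, W_3), and ψ_3 only on (W_1, W_3), such that for every 2-element subset {i, j} ⊆ {1, 2, 3} there is a function ρ_{ij} with ρ_{ij}(ψ_i W, ψ_j W) = (W_1, W_2, W_3) for all (W_1, W_2, W_3) ∈ (𝔽_q^L)³. In particular any three linear combinations of the messages, and in particular the demand of Remark 3, can be computed from any 2 of the 3 answers with communication cost 3. -/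
section
variable {𝔽 : Type} [Field 𝔽]

def myPsi (m : ℕ) (X Y : Fin (m + m) → 𝔽) : Fin (3 * (m + m) / 2) → 𝔽 :=
  fun i =>
    if h : i.val < m then X ⟨i.val, by omega⟩
    else if h2 : i.val < m + m then Y ⟨i.val, h2⟩
    else X ⟨i.val - m, by have := i.2; omega⟩ + Y ⟨i.val - (m + m), by have := i.2; omega⟩

def myDec (m : ℕ) (x y : Fin (3 * (m + m) / 2) → 𝔽) :
    (Fin (m + m) → 𝔽) × (Fin (m + m) → 𝔽) × (Fin (m + m) → 𝔽) :=
  ( fun j => if h : j.val < m then x ⟨j.val, by omega⟩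
      else x ⟨j.val + m, by have := j.2; omega⟩ - y ⟨j.val - m, by have := j.2; omega⟩,
    fun j => if j.val < m then y ⟨j.val, by have := j.2; omega⟩ else x ⟨j.val, by have := j.2; omega⟩,
    fun j => if h : j.val < m then y ⟨(m + m) + j.val, by omega⟩ - x ⟨m + j.val, by omega⟩
      else y ⟨j.val, by have := j.2; omega⟩ )

lemma myDec_psi (m : ℕ) (X Y Z : Fin (m + m) → 𝔽) :
    myDec m (myPsi m X Y) (myPsi m Y Z) = (X, Y, Z) := by
  refine Prod.ext ?_ (Prod.ext ?_ ?_) <;>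
    · funext j
      simp only [myDec, myPsi]
      split_ifs <;>
        first
          | omega
          | simp only [Fin.eta]
          | (congr 1; ext; simp; omega)
          | (have e1 : (j : ℕ) + m - m = (j : ℕ) := by omega
             have e2 : (j : ℕ) + m - (m + m) = (j : ℕ) - m := by omega
             simp only [e1, e2, Fin.eta, add_sub_cancel_right])
          | (have e1 : m + m + (j : ℕ) - m = m + (j : ℕ) := by omega
             have e2 : m + m + (j : ℕ) - (m + m) = (j : ℕ) := by omega
             simp only [e1, e2, Fin.eta, add_sub_cancel_left])
end

/-- Example 3, achievability for `(K,N,N_r,K_c,M) = (3,3,2,3,2)`: for every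
large enough finite field `𝔽_q` and every even `L`, there exist encoders
`ψ₁(W₁,W₂), ψ₂(W₂,W₃), ψ₃(W₁,W₃)`, each sending `3L/2` symbols, such that from any 2 of the
3 answers all three messages `(W₁, W₂, W₃)` can be recovered (communication cost 3). -/
theorem stmt_15 :
    ∃ q₀ : ℕ, ∀ (𝔽 : Type) [Field 𝔽] [Fintype 𝔽], q₀ ≤ Fintype.card 𝔽 →
      ∀ L : ℕ, Even L →
      ∃ (ψ1 : (Fin L → 𝔽) → (Fin L → 𝔽) → (Fin (3 * L / 2) → 𝔽))
        (ψ2 : (Fin L → 𝔽) → (Fin L → 𝔽) → (Fin (3 * L / 2) → 𝔽))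
        (ψ3 : (Fin L → 𝔽) → (Fin L → 𝔽) → (Fin (3 * L / 2) → 𝔽)),
        (∃ ρ : (Fin (3 * L / 2) → 𝔽) → (Fin (3 * L / 2) → 𝔽) →
            ((Fin L → 𝔽) × (Fin L → 𝔽) × (Fin L → 𝔽)),
          ∀ W1 W2 W3 : Fin L → 𝔽, ρ (ψ1 W1 W2) (ψ2 W2 W3) = (W1, W2, W3)) ∧
        (∃ ρ : (Fin (3 * L / 2) → 𝔽) → (Fin (3 * L / 2) → 𝔽) →
            ((Fin L → 𝔽) × (Fin L → 𝔽) × (Fin L → 𝔽)),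
          ∀ W1 W2 W3 : Fin L → 𝔽, ρ (ψ1 W1 W2) (ψ3 W1 W3) = (W1, W2, W3)) ∧
        (∃ ρ : (Fin (3 * L / 2) → 𝔽) → (Fin (3 * L / 2) → 𝔽) →
            ((Fin L → 𝔽) × (Fin L → 𝔽) × (Fin L → 𝔽)),
          ∀ W1 W2 W3 : Fin L → 𝔽, ρ (ψ2 W2 W3) (ψ3 W1 W3) = (W1, W2, W3)) := by
  refine ⟨0, fun 𝔽 _ _ _ L hL => ?_⟩
  obtain ⟨m, rfl⟩ := hL
  refine ⟨myPsi m, myPsi m, fun W1 W3 => myPsi m W3 W1,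
    ⟨myDec m, fun W1 W2 W3 => myDec_psi m W1 W2 W3⟩,
    ⟨fun x y => ((myDec m y x).2.1, (myDec m y x).2.2, (myDec m y x).1),
      fun W1 W2 W3 => by simp only [myDec_psi m W3 W1 W2]⟩,
    ⟨fun x y => ((myDec m x y).2.2, (myDec m x y).1, (myDec m x y).2.1),
      fun W1 W2 W3 => by simp only [myDec_psi m W2 W3 W1]⟩⟩
end

section
/- (K = N headline achievability: recovering N_r generic linear combinations at the cost of gradient coding.) Let N_r ≤ N, K = N, K_c = N_r, and use the cyclic assignment Z_n = {n, n+1, …, n+(N−N_r)} ⊆ ZMod N. The number of matrices F ∈ Matrix (Fin N_r) (ZMod N) 𝔽_q for which there exist row vectors b_n ∈ 𝔽_q^{N} (n ∈ ZMod N), each b_n vanishing at all coordinates outside Z_n, such that for every A ⊆ ZMod N with |A| = N_r every row of F lies in the 𝔽_q-span of {b_n : n ∈ A}, is at least (1 − C(N, N_r)·( N·(N_r − 1)² + N_r! · N_r² )/q) · q^{N_r·N}, where C(·,·) denotes the binomial coefficient. In particular, with each of the N workers sending a single linear combination of its assigned messages, any N_r answers determine all N_r demanded linear combinations, for a fraction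 of demand matrices tending to 1 as q → ∞. -/
/-!
Write `N_r = m + 1`. Worker `n` sends `b_n(s) = det [F_{·,n-1}, …, F_{·,n-m}, F_{·,s}]`
(columns of `F` as rows of an `(m+1) × (m+1)` matrix). Expanding along the last row,
`b_n = c_n F` for a cofactor vector `c_n`, and `b_n` vanishes on the `m` positions
`n-1, …, n-m` that make up the complement of `Z_n`. For workers `n_0, …, n_m` the rows of `F`
lie in the span of the `b_{n_j}` as soon as the matrix `C` with rows `c_{n_j}` is invertible.

`det C` is a polynomial of total degree at most `(m+1) m` in the entries of `F`, and it is not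
the zero polynomial: zeroing row `j` of the generic matrix on the window of `n_j` makes `C`
diagonal, and each diagonal entry is, up to sign, a minor whose pattern of nonzero entries
contains a permutation (order the other workers by their cyclic distance to `n_j`).
Schwartz–Zippel, with a union bound over the `N_r! C(N, N_r)` injective enumerations
`Fin N_r ↪ ZMod N`, then bounds the number of bad `F`.
-/

open Finset MvPolynomial
open scoped Matrix

theorem MvPolynomial.card_filter_eval_eq_zero_le {σ K : Type*} [Fintype σ] [DecidableEq σ]
    [Field K] [Fintype K] [DecidableEq K] {p : MvPolynomial σ K} (hp : p ≠ 0) :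
    (#{v : σ → K | eval v p = 0} : ℚ) ≤
      p.totalDegree / Fintype.card K * Fintype.card K ^ Fintype.card σ := by
  let e := Fintype.equivFin σ
  have hp' : rename e p ≠ 0 := (rename_injective e e.injective).ne_iff.mpr (by simpa using hp)
  have hSZ := schwartz_zippel_totalDegree hp' univ
  have hcard : #{f : Fin (Fintype.card σ) → K | eval f (rename e p) = 0} =
      #{v : σ → K | eval v p = 0} :=
    card_nbij' (· ∘ e) (· ∘ e.symm)
      (fun f hf => by simpa [eval_rename] using hf)
      (fun v hv => by simpa [eval_rename, Function.comp_def] using hv)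
      (fun f _ => by simp [Function.comp_def]) (fun v _ => by simp [Function.comp_def])
  rw [Fintype.piFinset_univ, hcard, card_univ, div_le_iff₀ (by positivity)] at hSZ
  have hdeg : ((rename e p).totalDegree : ℚ) ≤ p.totalDegree := by
    exact_mod_cast totalDegree_rename_le _ _
  calc (#{v : σ → K | eval v p = 0} : ℚ)
      ≤ (rename e p).totalDegree / Fintype.card K * Fintype.card K ^ Fintype.card σ := by
        exact_mod_cast hSZ
    _ ≤ _ := by gcongr

theorem MvPolynomial.card_filter_forall_eval_ne_zero_ge {α σ K : Type*} [Fintype α]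
    [Fintype σ] [DecidableEq σ] [Field K] [Fintype K] [DecidableEq K]
    {p : α → MvPolynomial σ K} (hp : ∀ a, p a ≠ 0) {D : ℕ} (hD : ∀ a, (p a).totalDegree ≤ D) :
    (1 - Fintype.card α * D / Fintype.card K : ℚ) * Fintype.card K ^ Fintype.card σ ≤
      #{v : σ → K | ∀ a, eval v (p a) ≠ 0} := by
  set Q : ℚ := Fintype.card K ^ Fintype.card σ
  have hbad : #{v : σ → K | ¬ ∀ a, eval v (p a) ≠ 0} ≤
      ∑ a, #{v : σ → K | eval v (p a) = 0} := by
    refine (card_le_card fun v hv => ?_).trans card_biUnion_le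
    simp only [not_forall, not_not, mem_filter, mem_univ, true_and] at hv
    simpa using hv
  have hsum : (∑ a, #{v : σ → K | eval v (p a) = 0} : ℚ) ≤
      Fintype.card α * (D / Fintype.card K * Q) := by
    have hzeros (a : α) : (#{v : σ → K | eval v (p a) = 0} : ℚ) ≤ D / Fintype.card K * Q :=
      (card_filter_eval_eq_zero_le (hp a)).trans (by gcongr; exact hD a)
    simpa using sum_le_sum fun a (_ : a ∈ univ) => hzeros a
  have hsplit : (#{v : σ → K | ∀ a, eval v (p a) ≠ 0} : ℚ) +
      #{v : σ → K | ¬ ∀ a, eval v (p a) ≠ 0} = Q := by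
    have := card_filter_add_card_filter_not (s := (univ : Finset (σ → K)))
      (fun v => ∀ a, eval v (p a) ≠ 0)
    rw [card_univ, Fintype.card_fun] at this
    simp only [Q]
    exact_mod_cast this
  have hbadQ : (#{v : σ → K | ¬ ∀ a, eval v (p a) ≠ 0} : ℚ) ≤
      ∑ a, (#{v : σ → K | eval v (p a) = 0} : ℚ) := by exact_mod_cast hbad
  calc (1 - Fintype.card α * D / Fintype.card K : ℚ) * Q
      = Q - Fintype.card α * (D / Fintype.card K * Q) := by ring
    _ ≤ _ := by linarith

theorem Matrix.mem_span_rows_mul_of_det_ne_zero {n κ K : Type*} [Fintype n] [DecidableEq n]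
    [Field K] {C : Matrix n n K} (hC : C.det ≠ 0) (B : Matrix n κ K) (i : n) :
    B i ∈ Submodule.span K (Set.range fun j => (C * B) j) := by
  have hB : B i = C⁻¹ i ᵥ* (C * B) := by
    rw [← mul_apply_eq_vecMul, Matrix.nonsing_inv_mul_cancel_left C B (isUnit_iff_ne_zero.mpr hC)]
  rw [hB, vecMul_eq_sum]
  exact Submodule.sum_mem _ fun j _ => Submodule.smul_mem _ _ (Submodule.subset_span ⟨j, rfl⟩)

theorem MvPolynomial.totalDegree_det_le {n σ R : Type*} [Fintype n] [DecidableEq n] [CommRing R]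
    (M : Matrix n n (MvPolynomial σ R)) (d : n → ℕ) (h : ∀ t i, (M t i).totalDegree ≤ d t) :
    M.det.totalDegree ≤ ∑ t, d t := by
  rw [Matrix.det_apply]
  refine (totalDegree_finsetSum _ _).trans (Finset.sup_le fun π _ => ?_)
  have hprod : (∏ i, M (π i) i).totalDegree ≤ ∑ t, d t :=
    calc (∏ i, M (π i) i).totalDegree ≤ ∑ i, (M (π i) i).totalDegree := totalDegree_finsetProd _ _
      _ ≤ ∑ i, d (π i) := sum_le_sum fun i _ => h _ _
      _ = ∑ t, d t := Equiv.sum_comp π d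
  rcases Int.units_eq_one_or (Equiv.Perm.sign π) with hs | hs <;> simpa [hs] using hprod

/-- Specialising the variables `e (π r) r` to `1` and all others to `0` gives a permutation
matrix. -/
theorem MvPolynomial.det_ne_zero_of_perm {n κ K : Type*} [Fintype n] [DecidableEq n] [Field K]
    (P : n → n → Prop) [DecidableRel P] (e : n → n → κ)
    (he : Function.Injective (Function.uncurry e))
    (π : Equiv.Perm n) (hπ : ∀ r, ¬ P (π r) r) :
    (Matrix.of fun t r => if P t r then 0 else (X (e t r) : MvPolynomial κ K)).det ≠ 0 := by
  classical
  let y : κ → K := fun k => if ∃ r, k = e (π r) r then 1 else 0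
  have hy : (Matrix.of fun t r => if P t r then 0 else (X (e t r) : MvPolynomial κ K)).map (eval y)
      = (1 : Matrix n n K).submatrix id π := by
    ext t r
    by_cases htr : t = π r
    · subst htr
      simp [hπ r, y, show ∃ r', e (π r) r = e (π r') r' from ⟨r, rfl⟩]
      exact (Matrix.one_apply_eq _).symm
    · have hne : ¬ ∃ r', e t r = e (π r') r' := fun ⟨r', h⟩ => by
        obtain ⟨rfl, rfl⟩ : t = π r' ∧ r = r' := Prod.ext_iff.mp (@he (t, r) (π r', r') h)
        exact htr rfl
      by_cases hP : P t r <;> simp [hP, y, hne, htr]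
  intro h0
  have := congrArg (eval y) h0
  rw [RingHom.map_det, RingHom.mapMatrix_apply, hy, Matrix.det_permute', Matrix.det_one,
    map_zero] at this
  rcases Int.units_eq_one_or (Equiv.Perm.sign π) with hs | hs <;> simp [hs] at this

/-- `π r` is the rank of `d r` among the values of `d`. -/
theorem exists_perm_lt_and_add_le {m N : ℕ} (d : Fin m → ℕ) (hd : Function.Injective d)
    (hpos : ∀ r, 0 < d r) (hlt : ∀ r, d r < N) :
    ∃ π : Equiv.Perm (Fin m), ∀ r, (π r : ℕ) < d r ∧ d r + m ≤ N + π r := by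
  classical
  let rank (r : Fin m) : ℕ := #{r' | d r' < d r}
  have hbelow (r : Fin m) : rank r < d r := by
    have : rank r ≤ #(Ioo 0 (d r)) :=
      card_le_card_of_injOn d (fun r' hr' => by simpa [hpos r'] using hr') hd.injOn
    rw [Nat.card_Ioo] at this
    have := hpos r
    omega
  have habove (r : Fin m) : #{r' | d r < d r'} + d r < N := by
    have : #{r' | d r < d r'} ≤ #(Ioo (d r) N) :=
      card_le_card_of_injOn d (fun r' hr' => by simpa [hlt r'] using hr') hd.injOn
    rw [Nat.card_Ioo] at this
    have := hlt r
    omega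
  have hsplit (r : Fin m) : rank r + 1 + #{r' | d r < d r'} = m := by
    have hle : univ.filter (fun r' => d r' ≤ d r) =
        insert r (univ.filter fun r' => d r' < d r) := by
      ext r'; simp [le_iff_lt_or_eq, hd.eq_iff, or_comm]
    have := card_filter_add_card_filter_not (s := univ) (fun r' => d r' ≤ d r)
    simp only [not_le, card_univ, Fintype.card_fin, hle] at this
    rwa [card_insert_of_notMem (by simp)] at this
  have hmono {r r' : Fin m} (h : d r < d r') : rank r < rank r' :=
    card_lt_card ((ssubset_iff_of_subset fun r'' hr'' => by
      simp only [mem_filter, mem_univ, true_and] at hr'' ⊢; exact hr''.trans h).mpr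
      ⟨r, by simp [h]⟩)
  have hinj : Function.Injective fun r => (⟨rank r, by have := hsplit r; omega⟩ : Fin m) := by
    intro r r' h
    simp only [Fin.mk.injEq] at h
    rcases lt_trichotomy (d r) (d r') with h' | h' | h'
    · exact absurd h (hmono h').ne
    · exact hd h'
    · exact absurd h (hmono h').ne'
  refine ⟨Equiv.ofBijective _ (Finite.injective_iff_bijective.mp hinj), fun r => ?_⟩
  have := hsplit r
  have := habove r
  exact ⟨hbelow r, by simp only [Equiv.ofBijective_apply]; omega⟩

section WindowCofactor

variable {R : Type*} {ι : Type*} {m : ℕ}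

def windowMatrix (g : Matrix (Fin (m + 1)) ι R) (w : Fin m → ι) (v : Fin (m + 1) → R) :
    Matrix (Fin (m + 1)) (Fin (m + 1)) R :=
  Matrix.of (Fin.snoc (fun t => gᵀ (w t)) v)

variable (g : Matrix (Fin (m + 1)) ι R) (w : Fin m → ι)

@[simp]
lemma windowMatrix_castSucc (v : Fin (m + 1) → R) (t : Fin m) (k : Fin (m + 1)) :
    windowMatrix g w v t.castSucc k = g k (w t) := by
  simp [windowMatrix]

@[simp]
lemma windowMatrix_last (v : Fin (m + 1) → R) (k : Fin (m + 1)) :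
    windowMatrix g w v (Fin.last m) k = v k := by
  simp [windowMatrix]

lemma updateRow_windowMatrix (v v' : Fin (m + 1) → R) :
    (windowMatrix g w v).updateRow (Fin.last m) v' = windowMatrix g w v' := by
  ext t k
  cases t using Fin.lastCases <;> simp [Matrix.updateRow_apply, (Fin.castSucc_lt_last _).ne]

variable [CommRing R]

def windowCofactor (i : Fin (m + 1)) : R :=
  (windowMatrix g w (Pi.single i 1)).det

lemma det_windowMatrix (v : Fin (m + 1) → R) :
    (windowMatrix g w v).det = v ⬝ᵥ windowCofactor g w := by
  rw [Matrix.det_eq_sum_mul_adjugate_row _ (Fin.last m)]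
  refine sum_congr rfl fun i _ => ?_
  rw [Matrix.adjugate_apply, updateRow_windowMatrix, windowMatrix_last, windowCofactor]

lemma windowCofactor_vecMul_window (t : Fin m) : (windowCofactor g w ᵥ* g) (w t) = 0 := by
  have : (windowCofactor g w ᵥ* g) (w t) = (windowMatrix g w (gᵀ (w t))).det := by
    rw [det_windowMatrix, dotProduct_comm]
    rfl
  rw [this]
  exact Matrix.det_zero_of_row_eq (Fin.castSucc_lt_last t).ne (by ext; simp)

lemma map_windowCofactor {S : Type*} [CommRing S] (f : R →+* S) (i : Fin (m + 1)) :
    f (windowCofactor g w i) = windowCofactor (g.map f) w i := by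
  rw [windowCofactor, RingHom.map_det, windowCofactor]
  congr 1
  ext t k
  cases t using Fin.lastCases <;> simp [Pi.single_apply, apply_ite f]

lemma windowCofactor_eq_zero_of_ne {i j : Fin (m + 1)} (hg : ∀ t, g j (w t) = 0) (hij : i ≠ j) :
    windowCofactor g w i = 0 :=
  Matrix.det_eq_zero_of_column_eq_zero j fun t => by
    cases t using Fin.lastCases <;> simp [hg, hij.symm]

lemma windowCofactor_self (j : Fin (m + 1)) :
    windowCofactor g w j =
      (-1) ^ (m + j : ℕ) * (Matrix.of fun t r => g (j.succAbove r) (w t)).det := by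
  rw [windowCofactor, Matrix.det_succ_row _ (Fin.last m), sum_eq_single j]
  · congr 1
    · simp
    · congr 1; ext t r; simp
  · intro i _ hij; simp [hij]
  · simp

def cofactorMatrix (g : Matrix (Fin (m + 1)) ι R) (w : Fin (m + 1) → Fin m → ι) :
    Matrix (Fin (m + 1)) (Fin (m + 1)) R :=
  Matrix.of fun j => windowCofactor g (w j)

lemma det_cofactorMatrix_eq_prod_of_vanish (w : Fin (m + 1) → Fin m → ι)
    (hg : ∀ j t, g j (w j t) = 0) :
    (cofactorMatrix g w).det = ∏ j, windowCofactor g (w j) j := by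
  rw [← Matrix.det_diagonal]
  congr 1
  ext j i
  by_cases hij : j = i
  · subst hij; simp [cofactorMatrix]
  · simp [cofactorMatrix, hij, windowCofactor_eq_zero_of_ne g (w j) (hg j) (Ne.symm hij)]

lemma totalDegree_windowCofactor_le {σ : Type*} (g : Matrix (Fin (m + 1)) ι (MvPolynomial σ R))
    (hg : ∀ i s, (g i s).totalDegree ≤ 1) (w : Fin m → ι) (i : Fin (m + 1)) :
    (windowCofactor g w i).totalDegree ≤ m := by
  refine (totalDegree_det_le _ (Fin.snoc (fun _ => 1) 0) fun t k => ?_).trans (by simp)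
  cases t using Fin.lastCases with
  | last => simp [Pi.single_apply, apply_ite totalDegree]
  | cast t => simpa using hg k (w t)

lemma totalDegree_det_cofactorMatrix_mvPolynomialX_le [Fintype ι]
    (w : Fin (m + 1) → Fin m → ι) :
    (cofactorMatrix (Matrix.mvPolynomialX (Fin (m + 1)) ι R) w).det.totalDegree ≤ (m + 1) * m := by
  refine (totalDegree_det_le _ (fun _ => m) fun j i => ?_).trans (by simp)
  exact totalDegree_windowCofactor_le _
    (fun i s => (totalDegree_monomial_le _ _).trans (by simp)) (w j) i

lemma eval₂_det_cofactorMatrix_mvPolynomialX {S : Type*} [CommRing S] (f : R →+* S)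
    (A : Matrix (Fin (m + 1)) ι S) (w : Fin (m + 1) → Fin m → ι) :
    eval₂ f (fun p => A p.1 p.2) (cofactorMatrix (Matrix.mvPolynomialX (Fin (m + 1)) ι R) w).det =
      (cofactorMatrix A w).det := by
  rw [← coe_eval₂Hom, RingHom.map_det]
  congr 1
  ext j i
  rw [RingHom.mapMatrix_apply, Matrix.map_apply, cofactorMatrix, Matrix.of_apply,
    map_windowCofactor, coe_eval₂Hom, Matrix.mvPolynomialX_map_eval₂]
  rfl

end WindowCofactor

section Cyclic

variable {N m : ℕ}

/-- The positions `n - 1, …, n - m`; for `N_r = m + 1` they form the complement of `Z_n`. -/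
def cyclicWindow (m : ℕ) (n : ZMod N) (t : Fin m) : ZMod N := n - 1 - t

lemma ZMod.val_natCast_sub_natCast {a b : ℕ} (hab : a < b) (hb : b ≤ N) :
    ((a : ZMod N) - b).val = N + a - b := by
  have : (a : ZMod N) - b = ((N + a - b : ℕ) : ZMod N) := by
    rw [Nat.cast_sub (by omega), Nat.cast_add, ZMod.natCast_self, zero_add]
  rw [this, ZMod.val_cast_of_lt (by omega)]

lemma cyclicWindow_injective (hm : m ≤ N) (n : ZMod N) : Function.Injective (cyclicWindow m n) := by
  intro t t' h
  have h' : ((t : ℕ) : ZMod N) = (t' : ℕ) := by simpa [cyclicWindow] using h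
  have := congrArg ZMod.val h'
  rw [ZMod.val_cast_of_lt (by omega), ZMod.val_cast_of_lt (by omega)] at this
  exact Fin.ext this

/-- `(nn k - 1 - s).val < m` says that `s` lies in the window of worker `nn k`. -/
noncomputable def maskedMvPolynomialX (K : Type*) [CommRing K] (m : ℕ) (nn : Fin (m + 1) → ZMod N) :
    Matrix (Fin (m + 1)) (ZMod N) (MvPolynomial (Fin (m + 1) × ZMod N) K) :=
  Matrix.of fun k s => if (nn k - 1 - s).val < m then 0 else X (k, s)

lemma maskedMvPolynomialX_cyclicWindow {K : Type*} [CommRing K] (hm : m < N)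
    (nn : Fin (m + 1) → ZMod N) (k : Fin (m + 1)) (t : Fin m) :
    maskedMvPolynomialX K m nn k (cyclicWindow m (nn k) t) = 0 := by
  simp [maskedMvPolynomialX, cyclicWindow, ZMod.val_cast_of_lt (t.2.trans hm)]

variable [NeZero N]

lemma exists_cyclicWindow_eq (hm : m < N) {n c : ZMod N}
    (hc : c ∉ (range (N - (m + 1) + 1)).image fun j : ℕ => n + j) :
    ∃ t, cyclicWindow m n t = c := by
  obtain ⟨k, hkN, rfl⟩ : ∃ k < N, c = n + k := ⟨(c - n).val, ZMod.val_lt _, by simp⟩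
  have hkm : N - m ≤ k := by
    by_contra h
    exact hc (mem_image.mpr ⟨k, mem_range.mpr (by omega), rfl⟩)
  refine ⟨⟨N - 1 - k, by omega⟩, ?_⟩
  rw [cyclicWindow, Nat.cast_sub (by omega), Nat.cast_sub (by omega), ZMod.natCast_self]
  ring

variable {K : Type*} [Field K]

lemma windowCofactor_maskedMvPolynomialX_self_ne_zero (hm : m < N) {nn : Fin (m + 1) → ZMod N}
    (hnn : Function.Injective nn) (j : Fin (m + 1)) :
    windowCofactor (maskedMvPolynomialX K m nn) (cyclicWindow m (nn j)) j ≠ 0 := by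
  rw [windowCofactor_self]
  refine mul_ne_zero (pow_ne_zero _ (neg_ne_zero.mpr one_ne_zero)) ?_
  -- Entry `(t, r)` of the minor is nonzero iff `t < d r` and `d r + m ≤ N + t`.
  set d : Fin m → ℕ := fun r => (nn j - nn (j.succAbove r)).val
  have hd : Function.Injective d := fun r r' h =>
    Fin.succAbove_right_injective (hnn (by simpa [d] using ZMod.val_injective N h))
  have hpos (r : Fin m) : 0 < d r :=
    ZMod.val_pos.mpr (sub_ne_zero.mpr (hnn.ne (Fin.succAbove_ne j r).symm))
  obtain ⟨π, hπ⟩ := exists_perm_lt_and_add_le d hd hpos fun r => ZMod.val_lt _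
  refine det_ne_zero_of_perm (fun t r => (nn (j.succAbove r) - 1 - cyclicWindow m (nn j) t).val < m)
    (fun t r => (j.succAbove r, cyclicWindow m (nn j) t)) ?_ π fun r => ?_
  · rintro ⟨t, r⟩ ⟨t', r'⟩ h
    simp only [Function.uncurry_apply_pair, Prod.mk.injEq] at h
    obtain ⟨h1, h2⟩ := h
    rw [Fin.succAbove_right_injective h1, cyclicWindow_injective hm.le _ h2]
  · have : nn (j.succAbove r) - 1 - cyclicWindow m (nn j) (π r) =
        ((π r : ℕ) : ZMod N) - (d r : ℕ) := by
      simp only [d, ZMod.natCast_val, ZMod.cast_id', id, cyclicWindow]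
      ring
    rw [this, ZMod.val_natCast_sub_natCast (hπ r).1 (ZMod.val_lt _).le]
    have := hπ r
    omega

lemma det_cofactorMatrix_mvPolynomialX_ne_zero (hm : m < N) (nn : Fin (m + 1) ↪ ZMod N) :
    (cofactorMatrix (Matrix.mvPolynomialX (Fin (m + 1)) (ZMod N) K)
      fun j => cyclicWindow m (nn j)).det ≠ 0 := by
  intro h
  have := congrArg (eval₂ C fun p => maskedMvPolynomialX K m nn p.1 p.2) h
  rw [eval₂_det_cofactorMatrix_mvPolynomialX, det_cofactorMatrix_eq_prod_of_vanish _ _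
    (maskedMvPolynomialX_cyclicWindow hm nn), eval₂_zero] at this
  exact prod_ne_zero_iff.mpr (fun j _ =>
    windowCofactor_maskedMvPolynomialX_self_ne_zero hm nn.injective j) this

variable (m) in
def HasCyclicEncoding (F : Matrix (Fin (m + 1)) (ZMod N) K) : Prop :=
  ∃ b : ZMod N → (ZMod N → K),
    (∀ n : ZMod N, ∀ c : ZMod N,
      c ∉ (range (N - (m + 1) + 1)).image (fun j : ℕ => n + (j : ZMod N)) → b n c = 0) ∧
    ∀ A : Finset (ZMod N), A.card = m + 1 →
      ∀ i : Fin (m + 1), F i ∈ Submodule.span K (b '' (A : Set (ZMod N)))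

lemma hasCyclicEncoding_of_det_ne_zero (hm : m < N) (F : Matrix (Fin (m + 1)) (ZMod N) K)
    (hF : ∀ nn : Fin (m + 1) ↪ ZMod N, (cofactorMatrix F fun j => cyclicWindow m (nn j)).det ≠ 0) :
    HasCyclicEncoding m F := by
  refine ⟨fun n => windowCofactor F (cyclicWindow m n) ᵥ* F, fun n c hc => ?_, fun A hA i => ?_⟩
  · obtain ⟨t, rfl⟩ := exists_cyclicWindow_eq hm hc
    exact windowCofactor_vecMul_window F _ t
  · let nn : Fin (m + 1) ↪ ZMod N :=
      (equivFinOfCardEq hA).symm.toEmbedding.trans (Function.Embedding.subtype _)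
    refine Submodule.span_mono ?_ (Matrix.mem_span_rows_mul_of_det_ne_zero (hF nn) F i)
    rintro _ ⟨j, rfl⟩
    exact ⟨nn j, by simp [nn], rfl⟩

lemma card_hasCyclicEncoding_ge [Fintype K] (hm : m < N) :
    (1 - ((m + 1).factorial * N.choose (m + 1) * ((m + 1) * m) : ℕ) / Fintype.card K : ℚ) *
        Fintype.card K ^ ((m + 1) * N) ≤
      Nat.card {F : Matrix (Fin (m + 1)) (ZMod N) K // HasCyclicEncoding m F} := by
  classical
  let P (nn : Fin (m + 1) ↪ ZMod N) : MvPolynomial (Fin (m + 1) × ZMod N) K :=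
    (cofactorMatrix (Matrix.mvPolynomialX _ _ K) fun j => cyclicWindow m (nn j)).det
  have hcount := card_filter_forall_eval_ne_zero_ge (p := P)
    (det_cofactorMatrix_mvPolynomialX_ne_zero hm) fun _ =>
      totalDegree_det_cofactorMatrix_mvPolynomialX_le _
  rw [Fintype.card_embedding_eq, Nat.descFactorial_eq_factorial_mul_choose, Fintype.card_prod,
    Fintype.card_fin, ZMod.card, ← Nat.cast_mul] at hcount
  refine hcount.trans ?_
  rw [← Fintype.card_subtype, ← Nat.card_eq_fintype_card, Nat.cast_le]
  refine Nat.card_le_card_of_injective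
    (fun v => ⟨Matrix.of fun i s => v.1 (i, s), hasCyclicEncoding_of_det_ne_zero hm _
      fun nn => ?_⟩) fun v v' h => ?_
  · rw [← eval₂_det_cofactorMatrix_mvPolynomialX (RingHom.id K)]
    exact v.2 nn
  · ext ⟨i, s⟩
    simpa using congrFun (congrFun (congrArg Subtype.val h) i) s

end Cyclic

/-- K = N headline achievability: with `K = N`, `K_c = N_r` and the cyclic
assignment `Z_n = {n, …, n+(N−N_r)} ⊆ ZMod N`, the number of demand matrices
`F ∈ 𝔽_q^{N_r × N}` admitting one linear combination `b_n` per worker `n` (supported on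
`Z_n`) such that for every set `A` of `N_r` workers every row of `F` lies in the span of
`{b_n : n ∈ A}`, is at least `(1 − C(N,N_r)·(N(N_r−1)² + N_r!·N_r²)/q) · q^{N_r·N}`. -/
theorem stmt_16 {𝔽 : Type} [Field 𝔽] [Fintype 𝔽] (q : ℕ) (hq : Fintype.card 𝔽 = q)
    (N Nr : ℕ) [NeZero N] (hNr : 0 < Nr) (hNrN : Nr ≤ N) :
    let Z : ZMod N → Finset (ZMod N) := fun n =>
      (Finset.range (N - Nr + 1)).image fun j : ℕ => n + (j : ZMod N)
    let Good : Matrix (Fin Nr) (ZMod N) 𝔽 → Prop := fun F =>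
      ∃ b : ZMod N → (ZMod N → 𝔽),
        (∀ n : ZMod N, ∀ c : ZMod N, c ∉ Z n → b n c = 0) ∧
        ∀ A : Finset (ZMod N), A.card = Nr →
          ∀ i : Fin Nr, F i ∈ Submodule.span 𝔽 (b '' (A : Set (ZMod N)))
    ((1 : ℚ) - (N.choose Nr : ℚ) *
        ((N : ℚ) * ((Nr : ℚ) - 1) ^ 2 + (Nat.factorial Nr : ℚ) * (Nr : ℚ) ^ 2) / (q : ℚ))
      * (q : ℚ) ^ (Nr * N)
    ≤ (Nat.card {F : Matrix (Fin Nr) (ZMod N) 𝔽 // Good F} : ℚ) := by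
  intro Z Good
  obtain ⟨m, rfl⟩ : ∃ m, Nr = m + 1 := ⟨Nr - 1, by omega⟩
  refine le_trans ?_ (hq ▸ card_hasCyclicEncoding_ge (K := 𝔽) hNrN)
  have hD : (m + 1).factorial * N.choose (m + 1) * ((m + 1) * m) ≤
      N.choose (m + 1) * (N * m ^ 2 + (m + 1).factorial * (m + 1) ^ 2) :=
    calc _ = N.choose (m + 1) * ((m + 1).factorial * ((m + 1) * m)) := by ring
      _ ≤ _ := by gcongr; exact le_add_left (by gcongr; nlinarith)
  gcongr ?_ * _
  rw [show ((m + 1 : ℕ) : ℚ) - 1 = m by push_cast; ring]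
  gcongr
  exact_mod_cast hD
end
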